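/- arXiv:1203.2602 — 7 statements merged into one kernel-verified Lean document; each statement's English description precedes it below -/
import Mathlib

section
/- Fix an integer d ≥ 3 and for λ > 0 let q_*(λ) ∈ (0,1) be the unique fixed point of F_λ. Then the function λ ↦ (d-1)^2 (1-q_*(λ))^2 (which equals the derivative of F_λ∘F_λ at q_*(λ)) is strictly increasing in λ and equals 1 exactly at λ = λ_c(d); consequently it is < 1 for λ < λ_c(d) and > 1 for λ > λ_c(d). -/
/-!
A positive fixed point of `F_λ` is a root of `q + λ q^d = 1`. The left side increases in both
`q` and `λ`, so `q_*(λ)` is strictly decreasing, and hence `(d-1)^2 (1 - q_*(λ))^2` is strictly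
increasing. At `λ = λ_c(d)` the fixed point is `(d-2)/(d-1)`, where the quantity equals `1`.
-/

open Set

/-- The hard-core belief-propagation map `F_λ(q) = 1/(1 + λ q^{d-1})`. -/
noncomputable def hcF (d : ℕ) (lam q : ℝ) : ℝ := 1 / (1 + lam * q ^ (d - 1))

/-- The critical fugacity `λ_c(d) = (d-1)^{d-1}/(d-2)^d`. -/
noncomputable def hcLamc (d : ℕ) : ℝ := ((d:ℝ) - 1) ^ (d - 1) / ((d:ℝ) - 2) ^ d

lemma add_mul_pow_eq_one_of_hcF_eq_self {d : ℕ} (hd : 1 ≤ d) {lam q : ℝ} (hq : q ≠ 0)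
    (hf : hcF d lam q = q) : q + lam * q ^ d = 1 := by
  have hden : 1 + lam * q ^ (d - 1) ≠ 0 := by
    rintro h
    rw [hcF, h, div_zero] at hf
    exact hq hf.symm
  rw [hcF, div_eq_iff hden] at hf
  obtain ⟨k, rfl⟩ := Nat.exists_eq_add_of_le' hd
  rw [Nat.add_sub_cancel] at hf
  linear_combination -hf

lemma strictAntiOn_of_add_mul_pow_eq_one {d : ℕ} {qs : ℝ → ℝ}
    (hpos : ∀ lam, 0 < lam → 0 < qs lam)
    (hroot : ∀ lam, 0 < lam → qs lam + lam * qs lam ^ d = 1) :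
    StrictAntiOn qs (Ioi 0) := by
  intro l₁ h₁ l₂ h₂ hlt
  by_contra! hle
  have hpow : qs l₁ ^ d ≤ qs l₂ ^ d := pow_le_pow_left₀ (hpos l₁ h₁).le hle d
  have : l₁ * qs l₁ ^ d < l₂ * qs l₂ ^ d :=
    calc l₁ * qs l₁ ^ d ≤ l₁ * qs l₂ ^ d := mul_le_mul_of_nonneg_left hpow (le_of_lt h₁)
      _ < l₂ * qs l₂ ^ d := mul_lt_mul_of_pos_right hlt (pow_pos (hpos l₂ h₂) d)
  linarith [hroot l₁ h₁, hroot l₂ h₂]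

lemma hcF_hcLamc_eq_self {d : ℕ} (hd : 3 ≤ d) :
    hcF d (hcLamc d) (((d : ℝ) - 2) / ((d : ℝ) - 1)) = ((d : ℝ) - 2) / ((d : ℝ) - 1) := by
  have hd' : (3 : ℝ) ≤ d := by exact_mod_cast hd
  have ha : (d : ℝ) - 1 ≠ 0 := by linarith
  have hb : (d : ℝ) - 2 ≠ 0 := by linarith
  have hpow : ((d : ℝ) - 2) ^ d = ((d : ℝ) - 2) ^ (d - 1) * ((d : ℝ) - 2) := by
    rw [← pow_succ, Nat.sub_add_cancel (by omega)]
  rw [hcF, hcLamc, div_pow, hpow]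
  field_simp
  rw [show (d : ℝ) - 2 + 1 = d - 1 by ring, div_self ha]

lemma sq_mul_sq_one_sub_strictAntiOn {c : ℝ} (hc : c ≠ 0) :
    StrictAntiOn (fun q => c ^ 2 * (1 - q) ^ 2) (Iic 1) := by
  intro a _ b hb hab
  have hb' : (0 : ℝ) ≤ 1 - b := sub_nonneg.mpr hb
  have : (1 - b) ^ 2 < (1 - a) ^ 2 := pow_lt_pow_left₀ (by linarith) hb' two_ne_zero
  exact mul_lt_mul_of_pos_left this (by positivity)

theorem stmt1 (d : ℕ) (hd : 3 ≤ d) (qs : ℝ → ℝ)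
    (hqs : ∀ lam : ℝ, 0 < lam →
      qs lam ∈ Ioo (0:ℝ) 1 ∧ hcF d lam (qs lam) = qs lam)
    (huniq : ∀ lam : ℝ, 0 < lam →
      ∀ q ∈ Ioo (0:ℝ) 1, hcF d lam q = q → q = qs lam) :
    StrictMonoOn (fun lam => ((d:ℝ) - 1) ^ 2 * (1 - qs lam) ^ 2) (Ioi 0) ∧
    ((d:ℝ) - 1) ^ 2 * (1 - qs (hcLamc d)) ^ 2 = 1 ∧
    (∀ lam : ℝ, 0 < lam → lam < hcLamc d →
      ((d:ℝ) - 1) ^ 2 * (1 - qs lam) ^ 2 < 1) ∧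
    (∀ lam : ℝ, hcLamc d < lam →
      1 < ((d:ℝ) - 1) ^ 2 * (1 - qs lam) ^ 2) := by
  have hd' : (3 : ℝ) ≤ d := by exact_mod_cast hd
  have hqs_anti : StrictAntiOn qs (Ioi 0) :=
    strictAntiOn_of_add_mul_pow_eq_one (fun lam hl => (hqs lam hl).1.1) fun lam hl =>
      add_mul_pow_eq_one_of_hcF_eq_self (by omega) (hqs lam hl).1.1.ne' (hqs lam hl).2
  have hmono : StrictMonoOn (fun lam => ((d:ℝ) - 1) ^ 2 * (1 - qs lam) ^ 2) (Ioi 0) :=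
    (sq_mul_sq_one_sub_strictAntiOn (by linarith)).comp hqs_anti
      fun lam hl => (hqs lam hl).1.2.le
  have hlamc : 0 < hcLamc d := div_pos (pow_pos (by linarith) _) (pow_pos (by linarith) _)
  have hcrit : ((d:ℝ) - 1) ^ 2 * (1 - qs (hcLamc d)) ^ 2 = 1 := by
    have hmem : ((d : ℝ) - 2) / ((d : ℝ) - 1) ∈ Ioo (0 : ℝ) 1 :=
      ⟨div_pos (by linarith) (by linarith), (div_lt_one (by linarith)).mpr (by linarith)⟩
    have ha : (d : ℝ) - 1 ≠ 0 := by linarith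
    have hsub : 1 - ((d : ℝ) - 2) / ((d : ℝ) - 1) = 1 / ((d : ℝ) - 1) := by
      field_simp
      ring
    rw [← huniq _ hlamc _ hmem (hcF_hcLamc_eq_self hd), hsub, div_pow, one_pow,
      mul_one_div_cancel (pow_ne_zero 2 ha)]
  exact ⟨hmono, hcrit, fun lam hl hlt => (hmono hl hlamc hlt).trans_eq hcrit,
    fun lam hlt => hcrit.symm.trans_lt (hmono hlamc (hlamc.trans hlt) hlt)⟩
end

section
/- For every integer d ≥ 3 and every real λ > 0, the composition G_λ = F_λ ∘ F_λ has at most three fixed points in (0,1). -/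
open Set

/-!
Write `n = d - 1`. For `q ∈ (0,1)`, `F_λ(F_λ q) = q` means `(1 - q)(1 + λqⁿ)ⁿ = λq`, i.e. `q` is a
zero of `ψ(q) = log(1 - q) + n log(1 + λqⁿ) - log(λq)`. A direct computation gives
`ψ'(q) = -qⁿ χ(q) / (q(1 - q)(1 + λqⁿ))` with `χ(q) = q⁻ⁿ - λ(n²(1 - q) - 1)`, which is strictly
convex on `(0, ∞)` and therefore has at most two zeros. By Rolle's theorem `ψ` has at most three.
-/

theorem Set.exists_strictMono_fin_of_le_encard {α : Type*} [LinearOrder α] {s : Set α} {n : ℕ}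
    (h : (n : ℕ∞) ≤ s.encard) : ∃ e : Fin n → α, StrictMono e ∧ ∀ i, e i ∈ s := by
  obtain ⟨t, hts, ht⟩ := exists_subset_encard_eq h
  have htfin : t.Finite := finite_of_encard_eq_coe ht
  have hcard : htfin.toFinset.card = n := by
    rw [htfin.encard_eq_coe_toFinset_card] at ht
    exact_mod_cast ht
  exact ⟨htfin.toFinset.orderEmbOfFin hcard, (htfin.toFinset.orderEmbOfFin hcard).strictMono,
    fun i => hts (htfin.mem_toFinset.1 (Finset.orderEmbOfFin_mem _ hcard i))⟩

theorem StrictConvexOn.encard_zeros_le_two {s : Set ℝ} {f : ℝ → ℝ} (hf : StrictConvexOn ℝ s f) :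
    {x ∈ s | f x = 0}.encard ≤ 2 := by
  by_contra! h
  obtain ⟨e, he, hes⟩ := exists_strictMono_fin_of_le_encard (Order.add_one_le_of_lt h)
  have := hf.slope_strict_mono_adjacent (hes 0).1 (hes 2).1 (he (by decide : (0 : Fin 3) < 1))
    (he (by decide : (1 : Fin 3) < 2))
  simp [(hes 0).2, (hes 1).2, (hes 2).2] at this

theorem encard_zeros_le_encard_zeros_deriv_add_one {s : Set ℝ} {f f' : ℝ → ℝ}
    (hs : s.OrdConnected) (hf : ∀ x ∈ s, HasDerivAt f (f' x) x) :
    {x ∈ s | f x = 0}.encard ≤ {x ∈ s | f' x = 0}.encard + 1 := by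
  by_contra! h
  obtain ⟨m, hm⟩ := ENat.ne_top_iff_exists.1 (ne_top_of_lt (lt_of_le_of_lt le_self_add h))
  rw [← hm] at h
  obtain ⟨e, he, hes⟩ := exists_strictMono_fin_of_le_encard (n := m + 2)
    (by exact_mod_cast Order.add_one_le_of_lt h)
  have hIcc : ∀ i : Fin (m + 1), Icc (e i.castSucc) (e i.succ) ⊆ s := fun i =>
    hs.out (hes _).1 (hes _).1
  have hrolle : ∀ i : Fin (m + 1), ∃ c ∈ Ioo (e i.castSucc) (e i.succ), f' c = 0 := fun i =>
    exists_hasDerivAt_eq_zero (he i.castSucc_lt_succ)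
      (fun x hx => (hf x (hIcc i hx)).continuousAt.continuousWithinAt)
      (by rw [(hes _).2, (hes _).2])
      (fun x hx => hf x (hIcc i (Ioo_subset_Icc_self hx)))
  choose c hc hc' using hrolle
  have hcmono : StrictMono c := fun i j hij =>
    calc c i < e i.succ := (hc i).2
      _ ≤ e j.castSucc := he.monotone (Fin.succ_le_castSucc_iff.2 hij)
      _ < c j := (hc j).1
  have hsub : range c ⊆ {x ∈ s | f' x = 0} := by
    rintro _ ⟨i, rfl⟩
    exact ⟨hIcc i (Ioo_subset_Icc_self (hc i)), hc' i⟩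
  have := hcmono.injective.encard_range.trans (encard_le_encard hsub)
  rw [ENat.card_eq_coe_fintype_card, Fintype.card_fin, ← hm] at this
  norm_cast at this
  omega

noncomputable def hcPsi (n : ℕ) (lam q : ℝ) : ℝ :=
  Real.log (1 - q) + n * Real.log (1 + lam * q ^ n) - Real.log (lam * q)

noncomputable def hcChi (n : ℕ) (lam q : ℝ) : ℝ :=
  (q ^ n)⁻¹ - lam * (n ^ 2 * (1 - q) - 1)

noncomputable def hcPsiDeriv (n : ℕ) (lam q : ℝ) : ℝ :=
  -(q ^ n * hcChi n lam q) / (q * (1 - q) * (1 + lam * q ^ n))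

theorem hcPsi_eq_zero_of_hcF_hcF_eq {n : ℕ} {lam q : ℝ} (hlam : 0 < lam) (hq : q ∈ Ioo 0 1)
    (h : hcF (n + 1) lam (hcF (n + 1) lam q) = q) : hcPsi n lam q = 0 := by
  obtain ⟨hq0, hq1⟩ := hq
  have hA : 0 < 1 + lam * q ^ n := by positivity
  have hfix : (1 - q) * (1 + lam * q ^ n) ^ n = lam * q := by
    simp only [hcF, Nat.add_sub_cancel, div_pow, one_pow] at h
    field_simp at h
    linear_combination h
  rw [hcPsi, ← Real.log_pow, ← Real.log_mul (by linarith) (by positivity), hfix, sub_self]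

theorem hasDerivAt_hcPsi (n : ℕ) {lam q : ℝ} (hlam : 0 < lam) (hq : q ∈ Ioo 0 1) :
    HasDerivAt (hcPsi n lam) (hcPsiDeriv n lam q) q := by
  obtain ⟨hq0, hq1⟩ := hq
  have hA : 0 < 1 + lam * q ^ n := by positivity
  have h1q : 1 - q ≠ 0 := by linarith
  have hlog1 := ((hasDerivAt_id q).const_sub 1).log h1q
  have hlog2 := (((hasDerivAt_pow n q).const_mul lam).const_add 1).log hA.ne'
  have hlog3 := ((hasDerivAt_id q).const_mul lam).log (by positivity)
  refine HasDerivAt.congr_deriv (f := hcPsi n lam)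
    ((hlog1.add (hlog2.const_mul (n : ℝ))).sub hlog3) ?_
  have hpow : (n : ℝ) * q ^ (n - 1) * q = n * q ^ n := by
    cases n <;> simp [pow_succ]; ring
  simp only [hcPsiDeriv, hcChi, id]
  field_simp
  linear_combination ((1 - q) * n * lam) * hpow

theorem hcChi_eq_zero_of_hcPsiDeriv_eq_zero {n : ℕ} {lam q : ℝ} (hlam : 0 < lam)
    (hq : q ∈ Ioo 0 1) (h : hcPsiDeriv n lam q = 0) : hcChi n lam q = 0 := by
  obtain ⟨hq0, hq1⟩ := hq
  have hA : 0 < 1 + lam * q ^ n := by positivity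
  simpa [hcPsiDeriv, hq0.ne', (sub_pos.2 hq1).ne', hA.ne'] using h

theorem strictConvexOn_hcChi {n : ℕ} (hn : n ≠ 0) (lam : ℝ) :
    StrictConvexOn ℝ (Ioi 0) (hcChi n lam) := by
  have hpow : StrictConvexOn ℝ (Ioi 0) fun q : ℝ => (q ^ n)⁻¹ := by
    simpa [zpow_neg] using strictConvexOn_zpow (m := -n) (by simpa using hn) (by omega)
  have haff : ConcaveOn ℝ (Ioi 0) fun q : ℝ => lam * (n ^ 2 * (1 - q) - 1) := by
    refine ⟨convex_Ioi 0, fun x _ y _ a b _ _ hab => le_of_eq ?_⟩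
    simp only [smul_eq_mul]
    linear_combination (lam * (n ^ 2 - 1)) * hab
  exact hpow.sub_concaveOn haff

theorem stmt2 (d : ℕ) (hd : 3 ≤ d) (lam : ℝ) (hlam : 0 < lam) :
    {q ∈ Ioo (0:ℝ) 1 | hcF d lam (hcF d lam q) = q}.encard ≤ 3 := by
  obtain ⟨n, rfl⟩ : ∃ n, d = n + 1 := ⟨d - 1, by omega⟩
  calc {q ∈ Ioo (0:ℝ) 1 | hcF (n + 1) lam (hcF (n + 1) lam q) = q}.encard
      ≤ {q ∈ Ioo (0:ℝ) 1 | hcPsi n lam q = 0}.encard :=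
        encard_le_encard fun q hq => ⟨hq.1, hcPsi_eq_zero_of_hcF_hcF_eq hlam hq.1 hq.2⟩
    _ ≤ {q ∈ Ioo (0:ℝ) 1 | hcPsiDeriv n lam q = 0}.encard + 1 :=
        encard_zeros_le_encard_zeros_deriv_add_one ordConnected_Ioo
          fun q hq => hasDerivAt_hcPsi n hlam hq
    _ ≤ {q ∈ Ioi (0:ℝ) | hcChi n lam q = 0}.encard + 1 := by
        gcongr ?_ + _
        exact encard_le_encard fun q hq =>
          ⟨hq.1.1, hcChi_eq_zero_of_hcPsiDeriv_eq_zero hlam hq.1 hq.2⟩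
    _ ≤ 2 + 1 := by
        gcongr
        exact (strictConvexOn_hcChi (by omega) lam).encard_zeros_le_two
    _ = 3 := rfl
end

section
/- Fix an integer d ≥ 3. For 0 < λ ≤ λ_c(d), the unique fixed point q_*(λ) of F_λ is also the only fixed point of G_λ = F_λ ∘ F_λ in (0,1). For λ > λ_c(d), G_λ has exactly three fixed points q^-(λ) < q_*(λ) < q^+(λ) in (0,1), and F_λ interchanges the outer two: F_λ(q^+(λ)) = q^-(λ) and F_λ(q^-(λ)) = q^+(λ). -/
/-!
Write `n = d - 1`. For `q ∈ (0,1)`, `F (F q) = q` iff `(1 - q)(1 + λqⁿ)ⁿ = λq`, i.e. iff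
`ψ(q) = n log(1 + λqⁿ) + log(1 - q) - log λ - log q` vanishes. The derivative of `ψ` has the
sign of `m(q) = λqⁿ(n²(1 - q) - 1) - 1`, which increases up to `q̄ = (n - 1)/n` and decreases
after it, with `m(q̄) > 0 ↔ λ > λ_c`.

If `λ ≤ λ_c`, then `ψ` is strictly decreasing, so its only zero is `q_*`. If `λ > λ_c`, then `m`
vanishes at some `a < q̄ < b`, and `ψ` decreases on `(0, a]`, increases on `[a, b]` and decreases on
`[b, 1)`. The fixed-point equation `λq_*ⁿ⁺¹ = 1 - q_*` gives `q_* m(q_*) = n²(1 - q_*)² - 1 > 0`, so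
`q_* ∈ (a, b)`; as `(1 - q)(1 + λqⁿ)ⁿ - λq` is `1` at `0` and `-λ` at `1`, each outer piece holds
exactly one more zero. `F` permutes the three zeros and fixes only `q_*`, so it swaps the other two.
-/

open Set

lemma Function.apply_eq_of_isFixedPt_comp_self {α : Type*} {f : α → α} {s : Set α}
    (hf : MapsTo f s s) {x p y : α} (hxp : x ≠ p) (hfix : ∀ z ∈ s, IsFixedPt f z → z = p)
    (hcycle : ∀ z ∈ s, IsFixedPt (f ∘ f) z ↔ z = x ∨ z = p ∨ z = y) (hx : x ∈ s)
    (hp : IsFixedPt f p) : f x = y ∧ f y = x := by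
  have hxx : f (f x) = x := (hcycle x hx).2 (.inl rfl)
  have hfx : f x = y := by
    rcases (hcycle (f x) (hf hx)).1 (congrArg f hxx) with h | h | h
    · exact absurd (hfix x hx h) hxp
    · exact absurd (hxx.symm.trans (h ▸ hp)) hxp
    · exact h
  exact ⟨hfx, hfx ▸ hxx⟩

namespace HardCore

open Real

variable {n : ℕ} {lam q a b : ℝ}

lemma hcF_succ (n : ℕ) (lam q : ℝ) : hcF (n + 1) lam q = 1 / (1 + lam * q ^ n) := by
  simp [hcF]

lemma hcLamc_succ (n : ℕ) : hcLamc (n + 1) = (n : ℝ) ^ n / ((n : ℝ) - 1) ^ (n + 1) := by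
  simp only [hcLamc, Nat.add_sub_cancel, Nat.cast_add, Nat.cast_one]
  ring_nf

lemma hcLamc_pos (hn : 2 ≤ n) : 0 < hcLamc (n + 1) := by
  have h2 : (2 : ℝ) ≤ n := by exact_mod_cast hn
  rw [hcLamc_succ]
  exact div_pos (pow_pos (by linarith) _) (pow_pos (by linarith) _)

lemma hcF_mem_Ioo (hlam : 0 < lam) (hq : 0 < q) : hcF (n + 1) lam q ∈ Ioo 0 1 := by
  have hA : 1 < 1 + lam * q ^ n := by have := pow_pos hq n; nlinarith
  rw [hcF_succ]
  exact ⟨by positivity, (div_lt_one (by linarith)).2 hA⟩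

lemma hcF_eq_self_iff (hlam : 0 < lam) (hq : 0 ≤ q) :
    hcF (n + 1) lam q = q ↔ lam * q ^ (n + 1) = 1 - q := by
  have hA : 0 < 1 + lam * q ^ n := by positivity
  rw [hcF_succ, div_eq_iff hA.ne', pow_succ]
  constructor <;> intro h <;> linarith

def cycleDefect (n : ℕ) (lam q : ℝ) : ℝ := (1 - q) * (1 + lam * q ^ n) ^ n - lam * q

lemma hcF_hcF_eq_self_iff (hlam : 0 < lam) (hq : 0 ≤ q) :
    hcF (n + 1) lam (hcF (n + 1) lam q) = q ↔ cycleDefect n lam q = 0 := by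
  have hA : 0 < 1 + lam * q ^ n := by positivity
  rw [hcF_succ, hcF_succ, cycleDefect, div_pow, one_pow, div_eq_iff (by positivity)]
  field_simp
  constructor <;> intro h <;> linarith

lemma continuous_cycleDefect : Continuous (cycleDefect n lam) := by
  unfold cycleDefect; fun_prop

noncomputable def logCycleDefect (n : ℕ) (lam q : ℝ) : ℝ :=
  n * log (1 + lam * q ^ n) + log (1 - q) - log lam - log q

lemma logCycleDefect_eq (hlam : 0 < lam) (hq : q ∈ Ioo 0 1) :
    logCycleDefect n lam q = log ((1 - q) * (1 + lam * q ^ n) ^ n) - log (lam * q) := by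
  have hA : 0 < 1 + lam * q ^ n := by have := hq.1; positivity
  rw [log_mul (by linarith [hq.2]) (by positivity), log_mul hlam.ne' hq.1.ne', log_pow,
    logCycleDefect]
  ring

def logCycleDefectNum (n : ℕ) (lam q : ℝ) : ℝ := lam * q ^ n * (n ^ 2 * (1 - q) - 1) - 1

lemma hasDerivAt_logCycleDefect (hlam : 0 < lam) (hq : q ∈ Ioo 0 1) :
    HasDerivAt (logCycleDefect n lam)
      (logCycleDefectNum n lam q / (q * (1 - q) * (1 + lam * q ^ n))) q := by
  have hq0 := hq.1
  have h1q : 1 - q ≠ 0 := by linarith [hq.2]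
  have hA : 1 + lam * q ^ n ≠ 0 := by positivity
  have hpow : HasDerivAt (fun x : ℝ => 1 + lam * x ^ n) (lam * (n * q ^ (n - 1))) q := by
    simpa using ((hasDerivAt_pow n q).const_mul lam).const_add 1
  have hsub : HasDerivAt (fun x : ℝ => 1 - x) (-1) q := by
    simpa using (hasDerivAt_id q).const_sub 1
  refine ((((hpow.log hA).const_mul (n : ℝ)).add (hsub.log h1q)).sub_const (log lam)).sub
    (hasDerivAt_log hq0.ne') |>.congr_deriv ?_
  rcases n.eq_zero_or_pos with rfl | hn
  · simp only [CharP.cast_eq_zero, zero_mul, pow_zero, logCycleDefectNum]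
    field_simp
    ring
  · have : q ^ n = q ^ (n - 1) * q := by rw [← pow_succ, Nat.sub_add_cancel hn]
    rw [logCycleDefectNum, this]
    field_simp
    ring

lemma hasDerivAt_logCycleDefectNum :
    HasDerivAt (logCycleDefectNum n lam)
      (lam * (n * (n + 1)) * q ^ (n - 1) * ((n - 1) - n * q)) q := by
  have h := (((hasDerivAt_pow n q).const_mul lam).mul
    ((((hasDerivAt_id q).const_sub 1).const_mul ((n : ℝ) ^ 2)).sub_const 1)).sub_const 1
  refine h.congr_deriv ?_
  rcases n.eq_zero_or_pos with rfl | hn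
  · simp
  · have : q ^ n = q ^ (n - 1) * q := by rw [← pow_succ, Nat.sub_add_cancel hn]
    rw [this]
    simp only [id_eq, mul_neg, mul_one]
    ring

lemma continuous_logCycleDefectNum : Continuous (logCycleDefectNum n lam) := by
  unfold logCycleDefectNum; fun_prop

noncomputable def critPoint (n : ℕ) : ℝ := (n - 1) / n

lemma critPoint_mem_Ioo (hn : 2 ≤ n) : critPoint n ∈ Ioo 0 1 := by
  have h2 : (2 : ℝ) ≤ n := by exact_mod_cast hn
  exact ⟨div_pos (by linarith) (by linarith), (div_lt_one (by linarith)).2 (by linarith)⟩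

lemma logCycleDefectNum_strictMonoOn (hn : 2 ≤ n) (hlam : 0 < lam) :
    StrictMonoOn (logCycleDefectNum n lam) (Icc 0 (critPoint n)) := by
  have h2 : (2 : ℝ) ≤ n := by exact_mod_cast hn
  refine strictMonoOn_of_deriv_pos (convex_Icc _ _) continuous_logCycleDefectNum.continuousOn
    fun x hx => ?_
  rw [interior_Icc] at hx
  have hx' : n * x < n - 1 := by
    have := hx.2; rw [critPoint, lt_div_iff₀ (by linarith)] at this; linarith
  rw [hasDerivAt_logCycleDefectNum.deriv]
  have := pow_pos hx.1 (n - 1)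
  have : 0 < (n : ℝ) * (n + 1) := by positivity
  apply mul_pos (by positivity) (by linarith)

lemma logCycleDefectNum_strictAntiOn (hn : 2 ≤ n) (hlam : 0 < lam) :
    StrictAntiOn (logCycleDefectNum n lam) (Icc (critPoint n) 1) := by
  have h2 : (2 : ℝ) ≤ n := by exact_mod_cast hn
  refine strictAntiOn_of_deriv_neg (convex_Icc _ _) continuous_logCycleDefectNum.continuousOn
    fun x hx => ?_
  rw [interior_Icc] at hx
  have hx' : n - 1 < n * x := by
    have := hx.1; rw [critPoint, div_lt_iff₀ (by linarith)] at this; linarith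
  rw [hasDerivAt_logCycleDefectNum.deriv]
  have := pow_pos ((critPoint_mem_Ioo hn).1.trans hx.1) (n - 1)
  have : 0 < (n : ℝ) * (n + 1) := by positivity
  apply mul_neg_of_pos_of_neg (by positivity) (by linarith)

lemma logCycleDefectNum_critPoint (hn : 2 ≤ n) :
    logCycleDefectNum n lam (critPoint n) =
      (lam - hcLamc (n + 1)) * ((n - 1) ^ (n + 1) / n ^ n) := by
  have h2 : (2 : ℝ) ≤ n := by exact_mod_cast hn
  have : (n : ℝ) - 1 ≠ 0 := by linarith
  rw [logCycleDefectNum, critPoint, hcLamc_succ, div_pow]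
  field_simp
  ring

lemma logCycleDefectNum_critPoint_pos_iff (hn : 2 ≤ n) :
    0 < logCycleDefectNum n lam (critPoint n) ↔ hcLamc (n + 1) < lam := by
  have h2 : (2 : ℝ) ≤ n := by exact_mod_cast hn
  rw [logCycleDefectNum_critPoint hn,
    mul_pos_iff_of_pos_right (div_pos (pow_pos (by linarith) _) (pow_pos (by linarith) _)),
    sub_pos]

lemma hcLamc_mul_critPoint_pow (hn : 2 ≤ n) :
    hcLamc (n + 1) * critPoint n ^ (n + 1) = 1 - critPoint n := by
  have h2 : (2 : ℝ) ≤ n := by exact_mod_cast hn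
  have : (n : ℝ) - 1 ≠ 0 := by linarith
  rw [critPoint, hcLamc_succ, div_pow]
  field_simp
  ring

lemma logCycleDefect_eq_zero_iff (hlam : 0 < lam) (hq : q ∈ Ioo 0 1) :
    logCycleDefect n lam q = 0 ↔ hcF (n + 1) lam (hcF (n + 1) lam q) = q := by
  have hA : 0 < 1 + lam * q ^ n := by have := hq.1; positivity
  rw [hcF_hcF_eq_self_iff hlam hq.1.le, logCycleDefect_eq hlam hq, sub_eq_zero, cycleDefect,
    sub_eq_zero]
  exact log_injOn_pos.eq_iff (mul_pos (sub_pos.2 hq.2) (pow_pos hA n)) (mul_pos hlam hq.1)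

lemma logCycleDefect_neg_iff (hlam : 0 < lam) (hq : q ∈ Ioo 0 1) :
    logCycleDefect n lam q < 0 ↔ cycleDefect n lam q < 0 := by
  have hA : 0 < 1 + lam * q ^ n := by have := hq.1; positivity
  rw [logCycleDefect_eq hlam hq, sub_neg, cycleDefect, sub_neg]
  exact log_lt_log_iff (mul_pos (sub_pos.2 hq.2) (pow_pos hA n)) (mul_pos hlam hq.1)

lemma logCycleDefect_pos_iff (hlam : 0 < lam) (hq : q ∈ Ioo 0 1) :
    0 < logCycleDefect n lam q ↔ 0 < cycleDefect n lam q := by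
  have hA : 0 < 1 + lam * q ^ n := by have := hq.1; positivity
  rw [logCycleDefect_eq hlam hq, sub_pos, cycleDefect, sub_pos]
  exact log_lt_log_iff (mul_pos hlam hq.1) (mul_pos (sub_pos.2 hq.2) (pow_pos hA n))

lemma logCycleDefect_strictAntiOn {s : Set ℝ} (hlam : 0 < lam) (hs : Convex ℝ s)
    (hs01 : s ⊆ Ioo 0 1) (hneg : ∀ x ∈ interior s, logCycleDefectNum n lam x < 0) :
    StrictAntiOn (logCycleDefect n lam) s := by
  refine strictAntiOn_of_deriv_neg hs (fun x hx =>
    (hasDerivAt_logCycleDefect hlam (hs01 hx)).continuousAt.continuousWithinAt) fun x hx => ?_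
  have hx01 := hs01 (interior_subset hx)
  have := hx01.1
  have := sub_pos.2 hx01.2
  rw [(hasDerivAt_logCycleDefect hlam hx01).deriv]
  exact div_neg_of_neg_of_pos (hneg x hx) (by positivity)

lemma logCycleDefect_strictMonoOn {s : Set ℝ} (hlam : 0 < lam) (hs : Convex ℝ s)
    (hs01 : s ⊆ Ioo 0 1) (hpos : ∀ x ∈ interior s, 0 < logCycleDefectNum n lam x) :
    StrictMonoOn (logCycleDefect n lam) s := by
  refine strictMonoOn_of_deriv_pos hs (fun x hx =>
    (hasDerivAt_logCycleDefect hlam (hs01 hx)).continuousAt.continuousWithinAt) fun x hx => ?_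
  have hx01 := hs01 (interior_subset hx)
  have := hx01.1
  have := sub_pos.2 hx01.2
  rw [(hasDerivAt_logCycleDefect hlam hx01).deriv]
  exact div_pos (hpos x hx) (by positivity)

lemma logCycleDefect_strictAntiOn_of_le (hn : 2 ≤ n) (hlam : 0 < lam)
    (hle : lam ≤ hcLamc (n + 1)) : StrictAntiOn (logCycleDefect n lam) (Ioo 0 1) := by
  have hc := critPoint_mem_Ioo hn
  have hm : logCycleDefectNum n lam (critPoint n) ≤ 0 :=
    not_lt.1 fun h => ((logCycleDefectNum_critPoint_pos_iff hn).1 h).not_ge hle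
  have hleft : StrictAntiOn (logCycleDefect n lam) (Ioc 0 (critPoint n)) := by
    refine logCycleDefect_strictAntiOn hlam (convex_Ioc _ _) (Ioc_subset_Ioo_right hc.2)
      fun x hx => ?_
    rw [interior_Ioc] at hx
    exact (logCycleDefectNum_strictMonoOn hn hlam ⟨hx.1.le, hx.2.le⟩ ⟨hc.1.le, le_rfl⟩
      hx.2).trans_le hm
  have hright : StrictAntiOn (logCycleDefect n lam) (Ico (critPoint n) 1) := by
    refine logCycleDefect_strictAntiOn hlam (convex_Ico _ _) (Ico_subset_Ioo_left hc.1)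
      fun x hx => ?_
    rw [interior_Ico] at hx
    exact (logCycleDefectNum_strictAntiOn hn hlam ⟨le_rfl, hc.2.le⟩ ⟨hx.1.le, hx.2.le⟩
      hx.1).trans_le hm
  rw [← Ioc_union_Ico_eq_Ioo hc.1 hc.2]
  exact hleft.union hright (isGreatest_Ioc hc.1) (isLeast_Ico hc.2)

lemma eq_of_hcF_hcF_eq_self_of_le (hn : 2 ≤ n) (hlam : 0 < lam) (hle : lam ≤ hcLamc (n + 1))
    {p : ℝ} (hp : p ∈ Ioo 0 1) (hpF : hcF (n + 1) lam p = p) (hq : q ∈ Ioo 0 1)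
    (hqG : hcF (n + 1) lam (hcF (n + 1) lam q) = q) : q = p := by
  refine (logCycleDefect_strictAntiOn_of_le hn hlam hle).injOn hq hp ?_
  rw [(logCycleDefect_eq_zero_iff hlam hq).2 hqG,
    (logCycleDefect_eq_zero_iff hlam hp).2 (by rw [hpF, hpF])]

lemma lt_critPoint_of_hcF_eq_self (hn : 2 ≤ n) (hgt : hcLamc (n + 1) < lam) {p : ℝ}
    (hp : 0 < p) (hpF : hcF (n + 1) lam p = p) : p < critPoint n := by
  have hc := critPoint_mem_Ioo hn
  have hfix := (hcF_eq_self_iff ((hcLamc_pos hn).trans hgt) hp.le).1 hpF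
  by_contra! hle
  have hcrit := hcLamc_mul_critPoint_pow hn
  have hlt := mul_lt_mul_of_pos_right hgt (pow_pos hc.1 (n + 1))
  have hpow := mul_le_mul_of_nonneg_left (pow_le_pow_left₀ hc.1.le hle (n + 1))
    ((hcLamc_pos hn).trans hgt).le
  linarith

lemma logCycleDefectNum_pos_of_hcF_eq_self (hn : 2 ≤ n) (hgt : hcLamc (n + 1) < lam) {p : ℝ}
    (hp : 0 < p) (hpF : hcF (n + 1) lam p = p) : 0 < logCycleDefectNum n lam p := by
  have h2 : (2 : ℝ) ≤ n := by exact_mod_cast hn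
  have hfix := (hcF_eq_self_iff ((hcLamc_pos hn).trans hgt) hp.le).1 hpF
  have hnp : 1 < n * (1 - p) := by
    have := lt_critPoint_of_hcF_eq_self hn hgt hp hpF
    rw [critPoint, lt_div_iff₀ (by linarith)] at this
    linarith
  have key : p * logCycleDefectNum n lam p = (n * (1 - p)) ^ 2 - 1 := by
    rw [logCycleDefectNum]
    linear_combination (n ^ 2 * (1 - p) - 1) * hfix
  have : 0 < p * logCycleDefectNum n lam p := by rw [key]; nlinarith
  exact pos_of_mul_pos_right this hp.le

lemma exists_logCycleDefectNum_eq_zero (hn : 2 ≤ n) (hgt : hcLamc (n + 1) < lam) :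
    (∃ a ∈ Ioo 0 (critPoint n), logCycleDefectNum n lam a = 0) ∧
      ∃ b ∈ Ioo (critPoint n) 1, logCycleDefectNum n lam b = 0 := by
  have hc := critPoint_mem_Ioo hn
  have hmc := (logCycleDefectNum_critPoint_pos_iff hn).2 hgt
  have hlam := (hcLamc_pos hn).trans hgt
  have h0 : logCycleDefectNum n lam 0 = -1 := by simp [logCycleDefectNum, show n ≠ 0 by omega]
  have h1 : logCycleDefectNum n lam 1 = -lam - 1 := by simp [logCycleDefectNum]
  constructor
  · exact intermediate_value_Ioo hc.1.le continuous_logCycleDefectNum.continuousOn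
      ⟨by linarith, hmc⟩
  · exact intermediate_value_Ioo' hc.2.le continuous_logCycleDefectNum.continuousOn
      ⟨by linarith, hmc⟩

lemma logCycleDefect_strictAntiOn_Ioc (hn : 2 ≤ n) (hlam : 0 < lam)
    (ha : a ∈ Ioo 0 (critPoint n)) (hma : logCycleDefectNum n lam a = 0) :
    StrictAntiOn (logCycleDefect n lam) (Ioc 0 a) := by
  refine logCycleDefect_strictAntiOn hlam (convex_Ioc _ _)
    (Ioc_subset_Ioo_right (ha.2.trans (critPoint_mem_Ioo hn).2)) fun x hx => ?_
  rw [interior_Ioc] at hx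
  rw [← hma]
  exact logCycleDefectNum_strictMonoOn hn hlam ⟨hx.1.le, (hx.2.trans ha.2).le⟩
    ⟨ha.1.le, ha.2.le⟩ hx.2

lemma logCycleDefect_strictAntiOn_Ico (hn : 2 ≤ n) (hlam : 0 < lam)
    (hb : b ∈ Ioo (critPoint n) 1) (hmb : logCycleDefectNum n lam b = 0) :
    StrictAntiOn (logCycleDefect n lam) (Ico b 1) := by
  refine logCycleDefect_strictAntiOn hlam (convex_Ico _ _)
    (Ico_subset_Ioo_left ((critPoint_mem_Ioo hn).1.trans hb.1)) fun x hx => ?_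
  rw [interior_Ico] at hx
  rw [← hmb]
  exact logCycleDefectNum_strictAntiOn hn hlam ⟨hb.1.le, hb.2.le⟩
    ⟨(hb.1.trans hx.1).le, hx.2.le⟩ hx.1

lemma logCycleDefect_strictMonoOn_Icc (hn : 2 ≤ n) (hlam : 0 < lam)
    (ha : a ∈ Ioo 0 (critPoint n)) (hb : b ∈ Ioo (critPoint n) 1)
    (hma : logCycleDefectNum n lam a = 0) (hmb : logCycleDefectNum n lam b = 0) :
    StrictMonoOn (logCycleDefect n lam) (Icc a b) := by
  refine logCycleDefect_strictMonoOn hlam (convex_Icc _ _) (Icc_subset_Ioo ha.1 hb.2)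
    fun x hx => ?_
  rw [interior_Icc] at hx
  rcases le_total x (critPoint n) with hxc | hxc
  · rw [← hma]
    exact logCycleDefectNum_strictMonoOn hn hlam ⟨ha.1.le, ha.2.le⟩
      ⟨(ha.1.trans hx.1).le, hxc⟩ hx.1
  · rw [← hmb]
    exact logCycleDefectNum_strictAntiOn hn hlam ⟨hxc, (hx.2.trans hb.2).le⟩
      ⟨hb.1.le, hb.2.le⟩ hx.2

lemma mem_Ioo_of_logCycleDefectNum_pos (hn : 2 ≤ n) (hlam : 0 < lam)
    (ha : a ∈ Ioo 0 (critPoint n)) (hb : b ∈ Ioo (critPoint n) 1)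
    (hma : logCycleDefectNum n lam a = 0) (hmb : logCycleDefectNum n lam b = 0)
    (hq : q ∈ Ioo 0 1) (hmq : 0 < logCycleDefectNum n lam q) : q ∈ Ioo a b := by
  constructor
  · by_contra! hqa
    have := (logCycleDefectNum_strictMonoOn hn hlam).monotoneOn ⟨hq.1.le, hqa.trans ha.2.le⟩
      ⟨ha.1.le, ha.2.le⟩ hqa
    linarith
  · by_contra! hbq
    have := (logCycleDefectNum_strictAntiOn hn hlam).antitoneOn ⟨hb.1.le, hb.2.le⟩
      ⟨hb.1.le.trans hbq, hq.2.le⟩ hbq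
    linarith

lemma exists_hcF_hcF_eq_self (hn : 2 ≤ n) (hgt : hcLamc (n + 1) < lam) {p : ℝ}
    (hp : p ∈ Ioo 0 1) (hpF : hcF (n + 1) lam p = p) :
    ∃ qm qp, qm ∈ Ioo 0 1 ∧ qp ∈ Ioo 0 1 ∧ qm < p ∧ p < qp ∧
      ∀ q ∈ Ioo 0 1, hcF (n + 1) lam (hcF (n + 1) lam q) = q ↔ q = qm ∨ q = p ∨ q = qp := by
  have hlam := (hcLamc_pos hn).trans hgt
  obtain ⟨⟨a, ha, hma⟩, ⟨b, hb, hmb⟩⟩ := exists_logCycleDefectNum_eq_zero hn hgt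
  have ha1 : a < 1 := ha.2.trans (critPoint_mem_Ioo hn).2
  have hb0 : 0 < b := (critPoint_mem_Ioo hn).1.trans hb.1
  have hleft := logCycleDefect_strictAntiOn_Ioc hn hlam ha hma
  have hmid := logCycleDefect_strictMonoOn_Icc hn hlam ha hb hma hmb
  have hright := logCycleDefect_strictAntiOn_Ico hn hlam hb hmb
  have hpab := mem_Ioo_of_logCycleDefectNum_pos hn hlam ha hb hma hmb hp
    (logCycleDefectNum_pos_of_hcF_eq_self hn hgt hp.1 hpF)
  have hψp : logCycleDefect n lam p = 0 := (logCycleDefect_eq_zero_iff hlam hp).2 (by rw [hpF, hpF])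
  have hDa : cycleDefect n lam a < 0 := (logCycleDefect_neg_iff hlam ⟨ha.1, ha1⟩).1
    (hψp ▸ hmid ⟨le_rfl, hpab.1.le.trans hpab.2.le⟩ ⟨hpab.1.le, hpab.2.le⟩ hpab.1)
  have hDb : 0 < cycleDefect n lam b := (logCycleDefect_pos_iff hlam ⟨hb0, hb.2⟩).1
    (hψp ▸ hmid ⟨hpab.1.le, hpab.2.le⟩ ⟨hpab.1.le.trans hpab.2.le, le_rfl⟩ hpab.2)
  have hD0 : cycleDefect n lam 0 = 1 := by simp [cycleDefect, show n ≠ 0 by omega]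
  have hD1 : cycleDefect n lam 1 = -lam := by simp [cycleDefect]
  obtain ⟨qm, hqm, hDqm⟩ := intermediate_value_Ioo' ha.1.le
    continuous_cycleDefect.continuousOn ⟨hDa, hD0 ▸ zero_lt_one⟩
  obtain ⟨qp, hqp, hDqp⟩ := intermediate_value_Ioo' hb.2.le
    continuous_cycleDefect.continuousOn ⟨hD1 ▸ neg_neg_of_pos hlam, hDb⟩
  have hqm01 : qm ∈ Ioo 0 1 := ⟨hqm.1, hqm.2.trans ha1⟩
  have hqp01 : qp ∈ Ioo 0 1 := ⟨hb0.trans hqp.1, hqp.2⟩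
  have hψqm := (logCycleDefect_eq_zero_iff hlam hqm01).2
    ((hcF_hcF_eq_self_iff hlam hqm01.1.le).2 hDqm)
  have hψqp := (logCycleDefect_eq_zero_iff hlam hqp01).2
    ((hcF_hcF_eq_self_iff hlam hqp01.1.le).2 hDqp)
  refine ⟨qm, qp, hqm01, hqp01, hqm.2.trans hpab.1, hpab.2.trans hqp.1, fun q hq => ?_⟩
  rw [← logCycleDefect_eq_zero_iff hlam hq]
  constructor
  · intro hψq
    rcases le_or_gt q a with hqa | haq
    · exact .inl (hleft.injOn ⟨hq.1, hqa⟩ ⟨hqm.1, hqm.2.le⟩ (hψq.trans hψqm.symm))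
    rcases le_or_gt q b with hqb | hbq
    · exact .inr (.inl (hmid.injOn ⟨haq.le, hqb⟩ ⟨hpab.1.le, hpab.2.le⟩ (hψq.trans hψp.symm)))
    · exact .inr (.inr (hright.injOn ⟨hbq.le, hq.2⟩ ⟨hqp.1.le, hqp.2⟩ (hψq.trans hψqp.symm)))
  · rintro (rfl | rfl | rfl) <;> assumption

end HardCore

theorem stmt3 (d : ℕ) (hd : 3 ≤ d) (qs : ℝ → ℝ)
    (hqs : ∀ lam : ℝ, 0 < lam →
      qs lam ∈ Ioo (0:ℝ) 1 ∧ hcF d lam (qs lam) = qs lam)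
    (huniq : ∀ lam : ℝ, 0 < lam →
      ∀ q ∈ Ioo (0:ℝ) 1, hcF d lam q = q → q = qs lam) :
    (∀ lam : ℝ, 0 < lam → lam ≤ hcLamc d →
      ∀ q ∈ Ioo (0:ℝ) 1, hcF d lam (hcF d lam q) = q → q = qs lam) ∧
    (∀ lam : ℝ, hcLamc d < lam →
      ∃ qm qp : ℝ, qm ∈ Ioo (0:ℝ) 1 ∧ qp ∈ Ioo (0:ℝ) 1 ∧
        qm < qs lam ∧ qs lam < qp ∧
        hcF d lam (hcF d lam qm) = qm ∧ hcF d lam (hcF d lam qp) = qp ∧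
        hcF d lam qp = qm ∧ hcF d lam qm = qp ∧
        (∀ q ∈ Ioo (0:ℝ) 1, hcF d lam (hcF d lam q) = q →
          q = qm ∨ q = qs lam ∨ q = qp)) := by
  obtain ⟨n, rfl⟩ : ∃ n, d = n + 1 := ⟨d - 1, by omega⟩
  have hn : 2 ≤ n := by omega
  refine ⟨fun lam hlam hle q hq hqG =>
    HardCore.eq_of_hcF_hcF_eq_self_of_le hn hlam hle (hqs lam hlam).1 (hqs lam hlam).2 hq hqG,
    fun lam hgt => ?_⟩
  have hlam := (HardCore.hcLamc_pos hn).trans hgt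
  obtain ⟨hp, hpF⟩ := hqs lam hlam
  obtain ⟨qm, qp, hqm, hqp, hqmp, hpqp, hcycle⟩ := HardCore.exists_hcF_hcF_eq_self hn hgt hp hpF
  obtain ⟨hFqm, hFqp⟩ := Function.apply_eq_of_isFixedPt_comp_self
    (fun q hq => HardCore.hcF_mem_Ioo hlam hq.1) hqmp.ne (huniq lam hlam) hcycle hqm hpF
  exact ⟨qm, qp, hqm, hqp, hqmp, hpqp, (hcycle qm hqm).2 (.inl rfl),
    (hcycle qp hqp).2 (.inr (.inr rfl)), hFqp, hFqm, fun q hq => (hcycle q hq).1⟩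
end

section
/- Fix an integer d ≥ 3. For λ > λ_c(d), let q^-(λ) < q^+(λ) denote the smallest and largest fixed points of G_λ = F_λ ∘ F_λ in (0,1). Then q^-(λ) and q^+(λ) are continuous functions of λ on (λ_c(d), ∞), and q^+(λ) → q_*(λ_c(d)) and q^-(λ) → q_*(λ_c(d)) as λ decreases to λ_c(d), where q_*(λ_c(d)) is the unique fixed point of F_{λ_c(d)}. -/
/-
Write `d = n + 2` and `S_k(r) = 1 + r + ⋯ + r^(k-1)`. A 2-cycle `q < p` of `F_λ` is determined
by its ratio `r = p / q > 1`: the two cycle equations give `1 - q = r^n (1 - p)`, hence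
`q = S_n(r) / S_(n+1)(r)` and `λ = Λ(r) := S_(n+1)(r)^(n+1) / (r S_n(r)^(n+2))`; conversely,
for every `r > 0`, `F_Λ(r)` exchanges these `q` and `r q`, and `Λ(1) = λ_c`. The logarithmic
derivative of `Λ` has the sign of `S_(n+2)(r) S_n(r) - n (n+2) r^n`, which is positive for
`r ≠ 1` because `S_k(r) ≥ k r^((k-1)/2)` by AM-GM on the pairs `r^i, r^(k-1-i)` (strictly if
`k ≥ 2`). So `Λ` is an increasing bijection `[1, ∞) → [λ_c, ∞)` with continuous inverse.
For `λ > λ_c` the smallest and largest fixed points of `F_λ ∘ F_λ` are not fixed by `F_λ`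
(the fixed point of `F_λ` lies strictly inside every 2-cycle), so they are the two points of the
unique 2-cycle: continuous functions of `r = Λ⁻¹(λ)` which at `r = 1` both equal `q_*(λ_c)`.
-/

open Set Filter

open Topology

theorem MonotoneOn.continuousOn_of_ordConnected {α β : Type*} [LinearOrder α]
    [TopologicalSpace α] [OrderTopology α] [LinearOrder β] [TopologicalSpace β]
    [OrderTopology β] [DenselyOrdered β] {f : α → β} {s : Set α} (hf : MonotoneOn f s)
    (hs : s.OrdConnected) (hfs : (f '' s).OrdConnected) : ContinuousOn f s := by
  let g : s → f '' s := fun x => ⟨f x, mem_image_of_mem f x.2⟩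
  have hg : Continuous g :=
    Monotone.continuous_of_surjective (fun x y hxy => hf x.2 y.2 hxy)
      (by rintro ⟨_, x, hx, rfl⟩; exact ⟨⟨x, hx⟩, rfl⟩)
  exact continuousOn_iff_continuous_domRestrict.2 (continuous_subtype_val.comp hg)

theorem StrictMonoOn.continuousOn_invFunOn {α β : Type*} [LinearOrder α] [TopologicalSpace α]
    [OrderTopology α] [DenselyOrdered α] [Nonempty α] [LinearOrder β] [TopologicalSpace β]
    [OrderTopology β] {f : α → β} {s : Set α} (hf : StrictMonoOn f s) (hs : s.OrdConnected)
    (hfs : (f '' s).OrdConnected) : ContinuousOn (Function.invFunOn f s) (f '' s) := by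
  refine MonotoneOn.continuousOn_of_ordConnected ?_ hfs
    (by rwa [hf.injOn.invFunOn_image subset_rfl])
  rintro _ ⟨a, ha, rfl⟩ _ ⟨b, hb, rfl⟩ hab
  rwa [hf.injOn.leftInvOn_invFunOn ha, hf.injOn.leftInvOn_invFunOn hb, ← hf.le_iff_le ha hb]

theorem ContinuousOn.continuousOn_Ioi_and_tendsto_of_eqOn {α β : Type*} [LinearOrder α]
    [TopologicalSpace α] [TopologicalSpace β] {f g : α → β} {a : α}
    (hg : ContinuousOn g (Ici a)) (hfg : EqOn f g (Ioi a)) :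
    ContinuousOn f (Ioi a) ∧ Tendsto f (𝓝[>] a) (𝓝 (g a)) :=
  ⟨(hg.mono Ioi_subset_Ici_self).congr hfg,
    ((hg a self_mem_Ici).tendsto.mono_left (nhdsWithin_mono a Ioi_subset_Ici_self)).congr'
      (eventuallyEq_nhdsWithin_of_eqOn hfg).symm⟩

lemma two_mul_pow_le_sq_add_sq (ρ : ℝ) {i m : ℕ} (hi : i ≤ m) :
    2 * ρ ^ m ≤ (ρ ^ i) ^ 2 + (ρ ^ (m - i)) ^ 2 := by
  rw [← pow_mul_pow_sub ρ hi]
  nlinarith [sq_nonneg (ρ ^ i - ρ ^ (m - i))]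

lemma two_mul_geom_sum_sq (ρ : ℝ) (k : ℕ) :
    2 * ∑ i ∈ Finset.range k, (ρ ^ 2) ^ i
      = ∑ i ∈ Finset.range k, ((ρ ^ i) ^ 2 + (ρ ^ (k - 1 - i)) ^ 2) := by
  simp_rw [Finset.sum_add_distrib, ← pow_mul, mul_comm 2, pow_mul]
  rw [Finset.sum_range_reflect (fun i => (ρ ^ i) ^ 2) k]
  ring

lemma natCast_mul_pow_le_geom_sum_sq (ρ : ℝ) (k : ℕ) :
    k * ρ ^ (k - 1) ≤ ∑ i ∈ Finset.range k, (ρ ^ 2) ^ i := by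
  have := Finset.sum_le_sum fun i (hi : i ∈ Finset.range k) =>
    two_mul_pow_le_sq_add_sq ρ (Nat.le_sub_one_of_lt (Finset.mem_range.1 hi))
  rw [Finset.sum_const, Finset.card_range, nsmul_eq_mul, ← two_mul_geom_sum_sq] at this
  linarith

lemma natCast_mul_pow_lt_geom_sum_sq {ρ : ℝ} (hρ : 0 ≤ ρ) (hρ1 : ρ ≠ 1) {k : ℕ}
    (hk : 2 ≤ k) :
    k * ρ ^ (k - 1) < ∑ i ∈ Finset.range k, (ρ ^ 2) ^ i := by
  have hpow : ρ ^ (k - 1) ≠ 1 := by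
    rwa [Ne, pow_eq_one_iff_of_nonneg hρ (by omega)]
  have hfirst : 2 * ρ ^ (k - 1) < (ρ ^ 0) ^ 2 + (ρ ^ (k - 1 - 0)) ^ 2 := by
    have : 0 < (1 - ρ ^ (k - 1)) ^ 2 := by positivity
    simp only [pow_zero, Nat.sub_zero]
    nlinarith
  have := Finset.sum_lt_sum (fun i (hi : i ∈ Finset.range k) =>
    two_mul_pow_le_sq_add_sq ρ (Nat.le_sub_one_of_lt (Finset.mem_range.1 hi)))
    ⟨0, Finset.mem_range.2 (by omega), hfirst⟩
  rw [Finset.sum_const, Finset.card_range, nsmul_eq_mul, ← two_mul_geom_sum_sq] at this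
  linarith

lemma mul_pow_lt_geom_sum_mul_geom_sum {n : ℕ} (hn : n ≠ 0) {r : ℝ} (hr : 0 < r)
    (hr1 : r ≠ 1) :
    n * (n + 2) * r ^ n
      < (∑ i ∈ Finset.range (n + 2), r ^ i) * ∑ i ∈ Finset.range n, r ^ i := by
  obtain ⟨ρ, hρ, rfl⟩ : ∃ ρ, 0 < ρ ∧ r = ρ ^ 2 :=
    ⟨√r, by positivity, (Real.sq_sqrt hr.le).symm⟩
  have hρ1 : ρ ≠ 1 := by rintro rfl; simp at hr1
  have hpow : ρ ^ (n + 2 - 1) * ρ ^ (n - 1) = (ρ ^ 2) ^ n := by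
    rw [← pow_add, ← pow_mul]; congr 1; omega
  calc (n : ℝ) * (n + 2) * (ρ ^ 2) ^ n
      = ((n + 2 : ℕ) * ρ ^ (n + 2 - 1)) * (n * ρ ^ (n - 1)) := by
        rw [← hpow]; push_cast; ring
    _ < _ := mul_lt_mul (natCast_mul_pow_lt_geom_sum_sq hρ.le hρ1 (by omega))
      (natCast_mul_pow_le_geom_sum_sq ρ n) (by have := Nat.pos_of_ne_zero hn; positivity)
      (by positivity)

lemma hasDerivAt_log_geom_sum {k : ℕ} (hk : k ≠ 0) {r : ℝ} (hr : 1 < r) :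
    HasDerivAt (fun s => Real.log (∑ i ∈ Finset.range k, s ^ i))
      (k * r ^ (k - 1) / (r ^ k - 1) - 1 / (r - 1)) r := by
  have hrk : 1 < r ^ k := one_lt_pow₀ hr hk
  have h1 := ((hasDerivAt_pow k r).sub_const 1).log (by linarith)
  have h2 := ((hasDerivAt_id' r).sub_const 1).log (by linarith)
  refine (h1.sub h2).congr_of_eventuallyEq ?_
  filter_upwards [Ioi_mem_nhds hr] with s (hs : 1 < s)
  have hsk : 1 < s ^ k := one_lt_pow₀ hs hk
  rw [geom_sum_eq hs.ne', Real.log_div (by linarith) (by linarith)]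
  rfl

lemma hcF_add_two (n : ℕ) (lam q : ℝ) : hcF (n + 2) lam q = (1 + lam * q ^ (n + 1))⁻¹ := by
  rw [hcF, one_div]; rfl

lemma hcF_mem_Ioo (n : ℕ) {lam q : ℝ} (hlam : 0 < lam) (hq : 0 < q) :
    hcF (n + 2) lam q ∈ Ioo 0 1 := by
  rw [hcF_add_two]
  have : 0 < lam * q ^ (n + 1) := by positivity
  exact ⟨by positivity, inv_lt_one_of_one_lt₀ (by linarith)⟩

lemma hcF_antitoneOn (n : ℕ) {lam : ℝ} (hlam : 0 ≤ lam) :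
    AntitoneOn (hcF (n + 2) lam) (Ici 0) := by
  intro a (ha : 0 ≤ a) b _ hab
  simp only [hcF_add_two]
  gcongr

def hcPeriodTwoPts (d : ℕ) (lam : ℝ) : Set ℝ :=
  {q ∈ Ioo 0 1 | hcF d lam (hcF d lam q) = q}

lemma hcF_mem_hcPeriodTwoPts {n : ℕ} {lam q : ℝ} (hlam : 0 < lam)
    (hq : q ∈ hcPeriodTwoPts (n + 2) lam) : hcF (n + 2) lam q ∈ hcPeriodTwoPts (n + 2) lam :=
  ⟨hcF_mem_Ioo n hlam hq.1.1, by rw [hq.2]⟩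

noncomputable def hcCycleLow (n : ℕ) (r : ℝ) : ℝ :=
  (∑ i ∈ Finset.range n, r ^ i) / ∑ i ∈ Finset.range (n + 1), r ^ i

noncomputable def hcCycleLam (n : ℕ) (r : ℝ) : ℝ :=
  (∑ i ∈ Finset.range (n + 1), r ^ i) ^ (n + 1)
    / (r * (∑ i ∈ Finset.range n, r ^ i) ^ (n + 2))

lemma hcCycleLow_pos {n : ℕ} (hn : n ≠ 0) {r : ℝ} (hr : 0 ≤ r) : 0 < hcCycleLow n r :=
  div_pos (geom_sum_pos hr hn) (geom_sum_pos hr n.succ_ne_zero)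

lemma mul_hcCycleLow_lt_one (n : ℕ) {r : ℝ} (hr : 0 ≤ r) : r * hcCycleLow n r < 1 := by
  rw [hcCycleLow, ← mul_div_assoc, div_lt_one (geom_sum_pos hr n.succ_ne_zero), geom_sum_succ]
  linarith

lemma hcCycleLow_lt_one (n : ℕ) {r : ℝ} (hr : 0 < r) : hcCycleLow n r < 1 := by
  rw [hcCycleLow, div_lt_one (geom_sum_pos hr.le n.succ_ne_zero), geom_sum_succ']
  linarith [pow_pos hr n]

lemma hcCycleLam_one (n : ℕ) : hcCycleLam n 1 = hcLamc (n + 2) := by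
  simp [hcCycleLam, hcLamc]
  ring

lemma continuousOn_hcCycleLow (n : ℕ) : ContinuousOn (hcCycleLow n) (Ici 0) :=
  ContinuousOn.div (by fun_prop) (by fun_prop) fun r hr =>
    (geom_sum_pos hr.out n.succ_ne_zero).ne'

lemma hcCycleLam_pos {n : ℕ} (hn : n ≠ 0) {r : ℝ} (hr : 0 < r) : 0 < hcCycleLam n r := by
  have := geom_sum_pos hr.le hn
  have := geom_sum_pos hr.le n.succ_ne_zero
  unfold hcCycleLam
  positivity

lemma continuousOn_hcCycleLam {n : ℕ} (hn : n ≠ 0) : ContinuousOn (hcCycleLam n) (Ioi 0) := by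
  refine ContinuousOn.div (by fun_prop) (by fun_prop) fun r (hr : 0 < r) => ?_
  have := geom_sum_pos hr.le hn
  positivity

lemma sub_one_lt_hcCycleLam {n : ℕ} (hn : n ≠ 0) {r : ℝ} (hr : 0 < r) :
    r - 1 < hcCycleLam n r := by
  have hP : 0 < ∑ i ∈ Finset.range n, r ^ i := geom_sum_pos hr.le hn
  have hQ : r * ∑ i ∈ Finset.range n, r ^ i < ∑ i ∈ Finset.range (n + 1), r ^ i := by
    rw [geom_sum_succ]; linarith
  have hlow : r ^ n / ∑ i ∈ Finset.range n, r ^ i ≤ hcCycleLam n r := by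
    rw [hcCycleLam, div_le_div_iff₀ hP (by positivity)]
    calc r ^ n * (r * (∑ i ∈ Finset.range n, r ^ i) ^ (n + 2))
        = (r * ∑ i ∈ Finset.range n, r ^ i) ^ (n + 1) * ∑ i ∈ Finset.range n, r ^ i := by
          ring
      _ ≤ _ := by gcongr
  refine lt_of_lt_of_le ?_ hlow
  rw [lt_div_iff₀ hP, mul_comm, geom_sum_mul]
  linarith

lemma hcCycleLam_mul_hcCycleLow_pow {n : ℕ} (hn : n ≠ 0) {r : ℝ} (hr : 0 < r) :
    hcCycleLam n r * hcCycleLow n r ^ (n + 1) = (r * ∑ i ∈ Finset.range n, r ^ i)⁻¹ := by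
  have hP : 0 < ∑ i ∈ Finset.range n, r ^ i := geom_sum_pos hr.le hn
  have hQ : 0 < ∑ i ∈ Finset.range (n + 1), r ^ i := geom_sum_pos hr.le n.succ_ne_zero
  rw [hcCycleLam, hcCycleLow]
  generalize ∑ i ∈ Finset.range n, r ^ i = P at hP ⊢
  generalize ∑ i ∈ Finset.range (n + 1), r ^ i = Q at hQ ⊢
  rw [div_pow]
  field_simp
  ring

lemma hcF_hcCycleLow {n : ℕ} (hn : n ≠ 0) {r : ℝ} (hr : 0 < r) :
    hcF (n + 2) (hcCycleLam n r) (hcCycleLow n r) = r * hcCycleLow n r := by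
  have hP : 0 < ∑ i ∈ Finset.range n, r ^ i := geom_sum_pos hr.le hn
  rw [hcF_add_two, hcCycleLam_mul_hcCycleLow_pow hn hr, hcCycleLow, geom_sum_succ]
  field_simp

lemma hcF_mul_hcCycleLow {n : ℕ} (hn : n ≠ 0) {r : ℝ} (hr : 0 < r) :
    hcF (n + 2) (hcCycleLam n r) (r * hcCycleLow n r) = hcCycleLow n r := by
  have hP : 0 < ∑ i ∈ Finset.range n, r ^ i := geom_sum_pos hr.le hn
  rw [hcF_add_two, mul_pow, mul_left_comm, hcCycleLam_mul_hcCycleLow_pow hn hr, hcCycleLow,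
    geom_sum_succ']
  field_simp
  ring

lemma hcCycle_of_lt_hcF {n : ℕ} {lam q : ℝ} (hlam : 0 < lam) (hq : 0 < q)
    (hG : hcF (n + 2) lam (hcF (n + 2) lam q) = q) (hlt : q < hcF (n + 2) lam q) :
    hcCycleLow n (hcF (n + 2) lam q / q) = q ∧ hcCycleLam n (hcF (n + 2) lam q / q) = lam := by
  generalize hp_def : hcF (n + 2) lam q = p at hG hlt
  have hp : p * (1 + lam * q ^ (n + 1)) = 1 := by
    rw [← hp_def, hcF_add_two, inv_mul_cancel₀ (by positivity)]
  have hq' : q * (1 + lam * p ^ (n + 1)) = 1 := by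
    rw [← hG, hcF_add_two, inv_mul_cancel₀ (by have := hq.trans hlt; positivity)]
  obtain ⟨r, hr1, rfl⟩ : ∃ r, 1 < r ∧ p = r * q :=
    ⟨p / q, (one_lt_div hq).2 hlt, by field_simp⟩
  rw [mul_div_cancel_right₀ _ hq.ne']
  have hQ : 0 < ∑ i ∈ Finset.range (n + 1), r ^ i := geom_sum_pos (by linarith) n.succ_ne_zero
  -- multiplied by `r - 1`, this is `1 - q = r ^ n * (1 - r * q)`
  have hqS : q * ∑ i ∈ Finset.range (n + 1), r ^ i = ∑ i ∈ Finset.range n, r ^ i := by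
    apply mul_right_cancel₀ (sub_ne_zero.2 hr1.ne')
    rw [mul_assoc, geom_sum_mul, geom_sum_mul]
    linear_combination r ^ n * hp - hq'
  refine ⟨by rw [hcCycleLow, ← hqS]; field_simp, ?_⟩
  have hQrec : ∑ i ∈ Finset.range (n + 1), r ^ i
      = r * (q * ∑ i ∈ Finset.range (n + 1), r ^ i) + 1 := by
    rw [hqS, geom_sum_succ]
  rw [hcCycleLam, ← hqS]
  generalize ∑ i ∈ Finset.range (n + 1), r ^ i = Q at hQ hQrec ⊢
  rw [eq_comm, eq_div_iff (by positivity)]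
  linear_combination Q ^ (n + 2) * hp + Q ^ (n + 1) * hQrec

lemma hasDerivAt_log_hcCycleLam {n : ℕ} (hn : n ≠ 0) {r : ℝ} (hr : 1 < r) :
    HasDerivAt (fun s => Real.log (hcCycleLam n s))
      (((∑ i ∈ Finset.range (n + 2), r ^ i) * (∑ i ∈ Finset.range n, r ^ i)
          - n * (n + 2) * r ^ n) /
        (r * (r - 1) * (∑ i ∈ Finset.range (n + 1), r ^ i) * ∑ i ∈ Finset.range n, r ^ i))
      r := by
  have hQ := (hasDerivAt_log_geom_sum (k := n + 1) n.succ_ne_zero hr).const_mul ((n : ℝ) + 1)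
  have hP := (hasDerivAt_log_geom_sum hn hr).const_mul ((n : ℝ) + 2)
  refine (((hQ.sub (Real.hasDerivAt_log (by positivity))).sub hP).congr_of_eventuallyEq ?_
    ).congr_deriv ?_
  · filter_upwards [Ioi_mem_nhds (zero_lt_one.trans hr)] with s (hs : 0 < s)
    have : 0 < ∑ i ∈ Finset.range n, s ^ i := geom_sum_pos hs.le hn
    have : 0 < ∑ i ∈ Finset.range (n + 1), s ^ i := geom_sum_pos hs.le n.succ_ne_zero
    rw [Pi.sub_apply, Pi.sub_apply, hcCycleLam, Real.log_div (by positivity) (by positivity),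
      Real.log_mul (by positivity) (by positivity), Real.log_pow, Real.log_pow]
    push_cast
    ring
  · have hP : 0 < ∑ i ∈ Finset.range n, r ^ i := geom_sum_pos (by positivity) hn
    have h1 : r ^ (n + 1) - 1 = (r - 1) * (r * ∑ i ∈ Finset.range n, r ^ i + 1) := by
      rw [← geom_sum_mul, geom_sum_succ]; ring
    have h2 : r ^ n - 1 = (r - 1) * ∑ i ∈ Finset.range n, r ^ i := by
      rw [← geom_sum_mul]; ring
    rw [Nat.add_sub_cancel, pow_sub₀ r (by positivity) (Nat.one_le_iff_ne_zero.2 hn), h1, h2,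
      geom_sum_succ', geom_sum_succ]
    push_cast
    generalize ∑ i ∈ Finset.range n, r ^ i = P at hP ⊢
    have : r - 1 ≠ 0 := sub_ne_zero.2 hr.ne'
    have : 0 < r * P + 1 := by positivity
    field_simp
    ring

lemma hcCycleLam_strictMonoOn {n : ℕ} (hn : n ≠ 0) : StrictMonoOn (hcCycleLam n) (Ici 1) := by
  have hpos : ∀ r ∈ Ici (1 : ℝ), 0 < hcCycleLam n r := fun r (hr : 1 ≤ r) =>
    hcCycleLam_pos hn (by linarith)
  have hlog : StrictMonoOn (fun s => Real.log (hcCycleLam n s)) (Ici 1) := by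
    refine strictMonoOn_of_deriv_pos (convex_Ici 1)
      (((continuousOn_hcCycleLam hn).mono fun r (hr : 1 ≤ r) => zero_lt_one.trans_le hr).log
        fun r hr => (hpos r hr).ne') fun r hr => ?_
    replace hr : 1 < r := by simpa using hr
    have := geom_sum_pos (zero_le_one.trans hr.le) hn
    have := geom_sum_pos (zero_le_one.trans hr.le) n.succ_ne_zero
    have := mul_pow_lt_geom_sum_mul_geom_sum hn (zero_lt_one.trans hr) hr.ne'
    have := sub_pos.2 hr
    rw [(hasDerivAt_log_hcCycleLam hn hr).deriv]
    exact div_pos (by linarith) (by positivity)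
  exact fun a ha b hb hab => (Real.log_lt_log_iff (hpos a ha) (hpos b hb)).1 (hlog ha hb hab)

lemma image_hcCycleLam_Ici {n : ℕ} (hn : n ≠ 0) :
    hcCycleLam n '' Ici 1 = Ici (hcLamc (n + 2)) := by
  refine Subset.antisymm ?_ fun lam (hlam : hcLamc (n + 2) ≤ lam) => ?_
  · rintro _ ⟨r, hr, rfl⟩
    rw [mem_Ici, ← hcCycleLam_one]
    exact (hcCycleLam_strictMonoOn hn).monotoneOn self_mem_Ici hr hr
  · have hlam0 : 0 < lam := (hcCycleLam_one n ▸ hcCycleLam_pos hn zero_lt_one).trans_le hlam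
    have hcont : ContinuousOn (hcCycleLam n) (Icc 1 (lam + 2)) :=
      (continuousOn_hcCycleLam hn).mono fun r hr => zero_lt_one.trans_le hr.1
    have hlam2 : lam ≤ hcCycleLam n (lam + 2) := by
      linarith [sub_one_lt_hcCycleLam hn (r := lam + 2) (by linarith)]
    obtain ⟨r, hr, rfl⟩ := intermediate_value_Icc (by linarith) hcont
      (show lam ∈ Icc _ _ from ⟨by rwa [hcCycleLam_one], hlam2⟩)
    exact ⟨r, hr.1, rfl⟩

noncomputable def hcCycleRatio (n : ℕ) : ℝ → ℝ :=
  Function.invFunOn (hcCycleLam n) (Ici 1)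

lemma hcCycleRatio_hcCycleLam {n : ℕ} (hn : n ≠ 0) {r : ℝ} (hr : 1 ≤ r) :
    hcCycleRatio n (hcCycleLam n r) = r :=
  (hcCycleLam_strictMonoOn hn).injOn.leftInvOn_invFunOn hr

lemma hcCycleRatio_lamc {n : ℕ} (hn : n ≠ 0) : hcCycleRatio n (hcLamc (n + 2)) = 1 := by
  rw [← hcCycleLam_one, hcCycleRatio_hcCycleLam hn le_rfl]

lemma hcCycleRatio_spec {n : ℕ} (hn : n ≠ 0) {lam : ℝ} (hlam : hcLamc (n + 2) ≤ lam) :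
    1 ≤ hcCycleRatio n lam ∧ hcCycleLam n (hcCycleRatio n lam) = lam :=
  Function.invFunOn_pos ((image_hcCycleLam_Ici hn).symm ▸ hlam : lam ∈ hcCycleLam n '' Ici 1)

lemma one_lt_hcCycleRatio {n : ℕ} (hn : n ≠ 0) {lam : ℝ} (hlam : hcLamc (n + 2) < lam) :
    1 < hcCycleRatio n lam := by
  obtain ⟨h1, heq⟩ := hcCycleRatio_spec hn hlam.le
  refine h1.lt_of_ne fun h => hlam.ne ?_
  rw [← heq, ← h, hcCycleLam_one]

lemma continuousOn_hcCycleRatio {n : ℕ} (hn : n ≠ 0) :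
    ContinuousOn (hcCycleRatio n) (Ici (hcLamc (n + 2))) := by
  rw [← image_hcCycleLam_Ici hn]
  exact (hcCycleLam_strictMonoOn hn).continuousOn_invFunOn ordConnected_Ici
    (by rw [image_hcCycleLam_Ici hn]; exact ordConnected_Ici)

lemma eq_hcCycleLow_of_lt_hcF {n : ℕ} (hn : n ≠ 0) {r q : ℝ} (hr : 1 ≤ r) (hq : 0 < q)
    (hG : hcF (n + 2) (hcCycleLam n r) (hcF (n + 2) (hcCycleLam n r) q) = q)
    (hlt : q < hcF (n + 2) (hcCycleLam n r) q) : q = hcCycleLow n r := by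
  obtain ⟨hlow, hlam⟩ := hcCycle_of_lt_hcF (hcCycleLam_pos hn (by linarith)) hq hG hlt
  have hratio : 1 ≤ hcF (n + 2) (hcCycleLam n r) q / q := (one_lt_div hq).2 hlt |>.le
  rw [← hlow, (hcCycleLam_strictMonoOn hn).injOn hratio hr hlam]

lemma hcCycleLow_mem_hcPeriodTwoPts {n : ℕ} (hn : n ≠ 0) {r : ℝ} (hr : 0 < r) :
    hcCycleLow n r ∈ hcPeriodTwoPts (n + 2) (hcCycleLam n r) :=
  ⟨⟨hcCycleLow_pos hn hr.le, hcCycleLow_lt_one n hr⟩,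
    by rw [hcF_hcCycleLow hn hr, hcF_mul_hcCycleLow hn hr]⟩

lemma hcF_hcLamc_hcCycleLow_one {n : ℕ} (hn : n ≠ 0) :
    hcF (n + 2) (hcLamc (n + 2)) (hcCycleLow n 1) = hcCycleLow n 1 := by
  simpa [hcCycleLam_one] using hcF_hcCycleLow hn one_pos

lemma mul_hcCycleLow_mem_hcPeriodTwoPts {n : ℕ} (hn : n ≠ 0) {r : ℝ} (hr : 0 < r) :
    r * hcCycleLow n r ∈ hcPeriodTwoPts (n + 2) (hcCycleLam n r) :=
  ⟨⟨mul_pos hr (hcCycleLow_pos hn hr.le), mul_hcCycleLow_lt_one n hr.le⟩,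
    by rw [hcF_mul_hcCycleLow hn hr, hcF_hcCycleLow hn hr]⟩

lemma eq_hcCycleLow_of_isLeast {n : ℕ} (hn : n ≠ 0) {r lam qm : ℝ} (hr : 1 < r)
    (hlam : hcCycleLam n r = lam) (hqm : IsLeast (hcPeriodTwoPts (n + 2) lam) qm) :
    qm = hcCycleLow n r := by
  subst hlam
  have hr0 : 0 < r := by linarith
  have hlam := hcCycleLam_pos hn hr0
  have hx := hcCycleLow_pos hn hr0.le
  have hqmx : qm ≤ hcCycleLow n r := hqm.2 (hcCycleLow_mem_hcPeriodTwoPts hn hr0)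
  refine eq_hcCycleLow_of_lt_hcF hn hr.le hqm.1.1.1 hqm.1.2 (lt_of_not_ge fun hle => ?_)
  have hfix : hcF (n + 2) (hcCycleLam n r) qm = qm :=
    le_antisymm hle (hqm.2 (hcF_mem_hcPeriodTwoPts hlam hqm.1))
  have : r * hcCycleLow n r ≤ qm := by
    rw [← hcF_hcCycleLow hn hr0, ← hfix]
    exact hcF_antitoneOn n hlam.le hqm.1.1.1.le hx.le hqmx
  linarith [lt_mul_left hx hr]

lemma eq_mul_hcCycleLow_of_isGreatest {n : ℕ} (hn : n ≠ 0) {r lam qp : ℝ} (hr : 1 < r)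
    (hlam : hcCycleLam n r = lam) (hqp : IsGreatest (hcPeriodTwoPts (n + 2) lam) qp) :
    qp = r * hcCycleLow n r := by
  subst hlam
  have hr0 : 0 < r := by linarith
  have hlam := hcCycleLam_pos hn hr0
  have hx := hcCycleLow_pos hn hr0.le
  have hyqp : r * hcCycleLow n r ≤ qp := hqp.2 (mul_hcCycleLow_mem_hcPeriodTwoPts hn hr0)
  have hp := hcF_mem_hcPeriodTwoPts hlam hqp.1
  have hlt : hcF (n + 2) (hcCycleLam n r) qp < hcF (n + 2) (hcCycleLam n r)
      (hcF (n + 2) (hcCycleLam n r) qp) := by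
    refine lt_of_not_ge fun hle => ?_
    rw [hqp.1.2] at hle
    have hfix : hcF (n + 2) (hcCycleLam n r) qp = qp := le_antisymm (hqp.2 hp) hle
    have : qp ≤ hcCycleLow n r := by
      rw [← hcF_mul_hcCycleLow hn hr0, ← hfix]
      exact hcF_antitoneOn n hlam.le (mul_pos hr0 hx).le hqp.1.1.1.le hyqp
    linarith [lt_mul_left hx hr]
  rw [← hqp.1.2, eq_hcCycleLow_of_lt_hcF hn hr.le hp.1.1 hp.2 hlt, hcF_hcCycleLow hn hr0]

theorem stmt4_general (d : ℕ) (hd : 3 ≤ d) (qm qp : ℝ → ℝ) (qsc : ℝ)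
    (hqscu : ∀ q ∈ Ioo (0:ℝ) 1, hcF d (hcLamc d) q = q → q = qsc)
    (hqm : ∀ lam : ℝ, hcLamc d < lam →
      qm lam ∈ Ioo (0:ℝ) 1 ∧ hcF d lam (hcF d lam (qm lam)) = qm lam ∧
      ∀ q ∈ Ioo (0:ℝ) 1, hcF d lam (hcF d lam q) = q → qm lam ≤ q)
    (hqp : ∀ lam : ℝ, hcLamc d < lam →
      qp lam ∈ Ioo (0:ℝ) 1 ∧ hcF d lam (hcF d lam (qp lam)) = qp lam ∧
      ∀ q ∈ Ioo (0:ℝ) 1, hcF d lam (hcF d lam q) = q → q ≤ qp lam) :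
    ContinuousOn qm (Ioi (hcLamc d)) ∧
    ContinuousOn qp (Ioi (hcLamc d)) ∧
    Tendsto qp (nhdsWithin (hcLamc d) (Ioi (hcLamc d))) (nhds qsc) ∧
    Tendsto qm (nhdsWithin (hcLamc d) (Ioi (hcLamc d))) (nhds qsc) := by
  obtain ⟨n, rfl⟩ : ∃ n, d = n + 2 := ⟨d - 2, by omega⟩
  have hn : n ≠ 0 := by omega
  have hqsc : hcCycleLow n 1 = qsc :=
    hqscu _ (hcCycleLow_mem_hcPeriodTwoPts hn one_pos).1 (hcF_hcLamc_hcCycleLow_one hn)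
  have hlow : EqOn qm (fun lam => hcCycleLow n (hcCycleRatio n lam)) (Ioi (hcLamc (n + 2))) :=
    fun lam hlam => let ⟨h01, hfix, hmin⟩ := hqm lam hlam
      eq_hcCycleLow_of_isLeast hn (one_lt_hcCycleRatio hn hlam) (hcCycleRatio_spec hn hlam.le).2
        ⟨⟨h01, hfix⟩, fun q hq => hmin q hq.1 hq.2⟩
  have hhigh : EqOn qp (fun lam => hcCycleRatio n lam * hcCycleLow n (hcCycleRatio n lam))
      (Ioi (hcLamc (n + 2))) :=
    fun lam hlam => let ⟨h01, hfix, hmax⟩ := hqp lam hlam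
      eq_mul_hcCycleLow_of_isGreatest hn (one_lt_hcCycleRatio hn hlam)
        (hcCycleRatio_spec hn hlam.le).2 ⟨⟨h01, hfix⟩, fun q hq => hmax q hq.1 hq.2⟩
  have hR := continuousOn_hcCycleRatio hn
  have hlowR : ContinuousOn (fun lam => hcCycleLow n (hcCycleRatio n lam))
      (Ici (hcLamc (n + 2))) :=
    (continuousOn_hcCycleLow n).comp hR fun lam hlam =>
      zero_le_one.trans (hcCycleRatio_spec hn hlam).1
  obtain ⟨hm, hm'⟩ := hlowR.continuousOn_Ioi_and_tendsto_of_eqOn hlow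
  obtain ⟨hp, hp'⟩ := (hR.mul hlowR).continuousOn_Ioi_and_tendsto_of_eqOn hhigh
  simp only [Pi.mul_apply, hcCycleRatio_lamc hn, one_mul, hqsc] at hm' hp'
  exact ⟨hm, hp, hp', hm'⟩

theorem stmt4 (d : ℕ) (hd : 3 ≤ d) (qm qp : ℝ → ℝ) (qsc : ℝ)
    (hqsc : qsc ∈ Ioo (0:ℝ) 1 ∧ hcF d (hcLamc d) qsc = qsc)
    (hqscu : ∀ q ∈ Ioo (0:ℝ) 1, hcF d (hcLamc d) q = q → q = qsc)
    (hqm : ∀ lam : ℝ, hcLamc d < lam →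
      qm lam ∈ Ioo (0:ℝ) 1 ∧ hcF d lam (hcF d lam (qm lam)) = qm lam ∧
      ∀ q ∈ Ioo (0:ℝ) 1, hcF d lam (hcF d lam q) = q → qm lam ≤ q)
    (hqp : ∀ lam : ℝ, hcLamc d < lam →
      qp lam ∈ Ioo (0:ℝ) 1 ∧ hcF d lam (hcF d lam (qp lam)) = qp lam ∧
      ∀ q ∈ Ioo (0:ℝ) 1, hcF d lam (hcF d lam q) = q → q ≤ qp lam) :
    ContinuousOn qm (Ioi (hcLamc d)) ∧
    ContinuousOn qp (Ioi (hcLamc d)) ∧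
    Tendsto qp (nhdsWithin (hcLamc d) (Ioi (hcLamc d))) (nhds qsc) ∧
    Tendsto qm (nhdsWithin (hcLamc d) (Ioi (hcLamc d))) (nhds qsc) :=
  stmt4_general d hd qm qp qsc hqscu hqm hqp
end

section
/- Let d ≥ 3 be an integer, λ > 0, and let q^- ≤ q^+ in (0,1) satisfy q^- = F_λ(q^+) and q^+ = F_λ(q^-). Then for all q_1, …, q_d ∈ [q^-, q^+], (q_1 + ⋯ + q_d)/(1 + λ q_1 q_2 ⋯ q_d) ≥ d · (1/q^- + 1/q^+ − 1)^{-1}, with equality when q_1 = ⋯ = q_d = q^- or q_1 = ⋯ = q_d = q^+; moreover, if q^- < q^+ these two constant tuples are the only cases of equality. -/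
open Set

/-!
Put `B = 1/q⁻ + 1/q⁺ - 1`. The two fixed-point equations say exactly that the line
`x ↦ x B` meets the convex curve `x ↦ 1 + λ x^d` at `q⁻` and at `q⁺`, so on `[q⁻, q⁺]` the
line lies above the curve, strictly so in the interior. If a tuple in `[q⁻, q⁺]` has mean
`m`, AM-GM gives `1 + λ ∏ qᵢ ≤ 1 + λ m^d ≤ m B`, which rearranges to
`∑ qᵢ / (1 + λ ∏ qᵢ) ≥ d / B`. Equality forces `m` to be an endpoint, and a tuple in
`[q⁻, q⁺]` whose mean is an endpoint is constant.
-/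

open Finset

lemma mul_one_div_add_one_div_sub_one_of_eq_hcF {d : ℕ} {lam x y : ℝ} (hd : 1 ≤ d)
    (hx : x ≠ 0) (hy : y = hcF d lam x) : x * (1 / x + 1 / y - 1) = 1 + lam * x ^ d := by
  obtain ⟨k, rfl⟩ : ∃ k, d = k + 1 := ⟨d - 1, by omega⟩
  rw [hy, hcF, one_div_one_div, Nat.add_sub_cancel, pow_succ]
  field_simp
  ring

section Chord

variable {d : ℕ} {lam B a b x : ℝ}

lemma one_add_mul_pow_le_mul_of_mem_Icc (hlam : 0 ≤ lam) (ha : 0 ≤ a)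
    (hfa : a * B = 1 + lam * a ^ d) (hfb : b * B = 1 + lam * b ^ d) (hx : x ∈ Icc a b) :
    1 + lam * x ^ d ≤ x * B := by
  have hb : 0 ≤ b := ha.trans (hx.1.trans hx.2)
  rw [← segment_eq_Icc (hx.1.trans hx.2)] at hx
  obtain ⟨α, β, hα, hβ, hαβ, rfl⟩ := hx
  have hconv := (convexOn_pow d).2 (mem_Ici.2 ha) (mem_Ici.2 hb) hα hβ hαβ
  simp only [smul_eq_mul] at hconv ⊢
  calc 1 + lam * (α * a + β * b) ^ d ≤ 1 + lam * (α * a ^ d + β * b ^ d) := by gcongr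
    _ = (α * a + β * b) * B := by linear_combination -hαβ - α * hfa - β * hfb

lemma one_add_mul_pow_lt_mul_of_mem_Ioo (hd : 2 ≤ d) (hlam : 0 < lam) (ha : 0 ≤ a)
    (hfa : a * B = 1 + lam * a ^ d) (hfb : b * B = 1 + lam * b ^ d) (hx : x ∈ Ioo a b) :
    1 + lam * x ^ d < x * B := by
  have hab : a < b := hx.1.trans hx.2
  rw [← openSegment_eq_Ioo hab] at hx
  obtain ⟨α, β, hα, hβ, hαβ, rfl⟩ := hx
  have hconv := (strictConvexOn_pow hd).2 (mem_Ici.2 ha) (mem_Ici.2 (ha.trans hab.le))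
    hab.ne hα hβ hαβ
  simp only [smul_eq_mul] at hconv ⊢
  calc 1 + lam * (α * a + β * b) ^ d < 1 + lam * (α * a ^ d + β * b ^ d) := by gcongr
    _ = (α * a + β * b) * B := by linear_combination -hαβ - α * hfa - β * hfb

end Chord

lemma prod_le_mean_pow_card {ι : Type*} (s : Finset ι) {z : ι → ℝ}
    (hz : ∀ i ∈ s, 0 ≤ z i) : ∏ i ∈ s, z i ≤ ((∑ i ∈ s, z i) / #s) ^ #s := by
  rcases s.eq_empty_or_nonempty with rfl | hs
  · simp
  have h := Real.geom_mean_le_arith_mean s (fun _ => 1) z (fun _ _ => zero_le_one)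
    (by simpa using hs) hz
  simp only [Real.rpow_one, one_mul, sum_const, nsmul_eq_mul, mul_one] at h
  calc ∏ i ∈ s, z i = ((∏ i ∈ s, z i) ^ ((#s : ℝ)⁻¹)) ^ #s :=
        (Real.rpow_inv_natCast_pow (prod_nonneg hz) hs.card_pos.ne').symm
    _ ≤ _ := by gcongr; exact Real.rpow_nonneg (prod_nonneg hz) _

lemma mean_mem_Icc {ι : Type*} {s : Finset ι} {z : ι → ℝ} {a b : ℝ} (hs : s.Nonempty)
    (hz : ∀ i ∈ s, z i ∈ Icc a b) : (∑ i ∈ s, z i) / #s ∈ Icc a b := by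
  have hcard : (0 : ℝ) < #s := by exact_mod_cast hs.card_pos
  constructor
  · rw [le_div_iff₀' hcard]
    simpa using card_nsmul_le_sum s z a fun i hi => (hz i hi).1
  · rw [div_le_iff₀' hcard]
    simpa using sum_le_card_nsmul s z b fun i hi => (hz i hi).2

section Tuples

variable {ι : Type*} [Fintype ι] {q : ι → ℝ} {lam B a b : ℝ}

lemma one_add_mul_prod_pos (hlam : 0 ≤ lam) (hq : ∀ i, 0 ≤ q i) :
    0 < 1 + lam * ∏ i, q i := by
  have := Finset.prod_nonneg fun i (_ : i ∈ Finset.univ) => hq i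
  positivity

lemma forall_eq_of_mean_eq_of_le [Nonempty ι] (hq : ∀ i, a ≤ q i)
    (hmean : (∑ i, q i) / Fintype.card ι = a) (i : ι) : q i = a := by
  have hsum : ∑ _ : ι, a = ∑ i, q i := by
    rw [← hmean, sum_const, card_univ, nsmul_eq_mul, mul_div_cancel₀ _ (by positivity)]
  exact ((sum_eq_sum_iff_of_le fun i _ => hq i).1 hsum i (mem_univ i)).symm

lemma forall_eq_of_mean_eq_of_ge [Nonempty ι] (hq : ∀ i, q i ≤ b)
    (hmean : (∑ i, q i) / Fintype.card ι = b) (i : ι) : q i = b := by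
  have hsum : ∑ i, q i = ∑ _ : ι, b := by
    rw [← hmean, sum_const, card_univ, nsmul_eq_mul, mul_div_cancel₀ _ (by positivity)]
  exact (sum_eq_sum_iff_of_le fun i _ => hq i).1 hsum i (mem_univ i)

lemma one_add_mul_prod_le_mean_mul [Nonempty ι] (hlam : 0 ≤ lam) (ha : 0 ≤ a)
    (hfa : a * B = 1 + lam * a ^ Fintype.card ι) (hfb : b * B = 1 + lam * b ^ Fintype.card ι)
    (hq : ∀ i, q i ∈ Icc a b) :
    1 + lam * ∏ i, q i ≤ (∑ i, q i) / Fintype.card ι * B := by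
  have hmean := mean_mem_Icc univ_nonempty fun i _ => hq i
  rw [card_univ] at hmean
  calc 1 + lam * ∏ i, q i ≤ 1 + lam * ((∑ i, q i) / Fintype.card ι) ^ Fintype.card ι := by
        gcongr
        simpa using prod_le_mean_pow_card univ fun i _ => ha.trans (hq i).1
    _ ≤ _ := one_add_mul_pow_le_mul_of_mem_Icc hlam ha hfa hfb hmean

lemma card_mul_inv_le_sum_div_one_add_mul_prod [Nonempty ι] (hlam : 0 ≤ lam) (ha : 0 < a)
    (hfa : a * B = 1 + lam * a ^ Fintype.card ι) (hfb : b * B = 1 + lam * b ^ Fintype.card ι)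
    (hq : ∀ i, q i ∈ Icc a b) :
    Fintype.card ι * B⁻¹ ≤ (∑ i, q i) / (1 + lam * ∏ i, q i) := by
  have hB : 0 < B := pos_of_mul_pos_right (hfa ▸ by positivity) ha.le
  have hden := one_add_mul_prod_pos hlam fun i => ha.le.trans (hq i).1
  rw [← div_eq_mul_inv, div_le_div_iff₀ hB hden]
  have := one_add_mul_prod_le_mean_mul hlam ha.le hfa hfb hq
  rw [div_mul_eq_mul_div, le_div_iff₀ (by positivity)] at this
  linarith

lemma forall_eq_or_forall_eq_of_sum_div_eq [Nonempty ι] (hd : 2 ≤ Fintype.card ι)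
    (hlam : 0 < lam) (ha : 0 < a)
    (hfa : a * B = 1 + lam * a ^ Fintype.card ι) (hfb : b * B = 1 + lam * b ^ Fintype.card ι)
    (hq : ∀ i, q i ∈ Icc a b)
    (heq : (∑ i, q i) / (1 + lam * ∏ i, q i) = Fintype.card ι * B⁻¹) :
    (∀ i, q i = a) ∨ (∀ i, q i = b) := by
  set n := Fintype.card ι
  set m := (∑ i, q i) / n
  have hm : m ∈ Icc a b := by simpa using mean_mem_Icc univ_nonempty fun i _ => hq i
  have hden := one_add_mul_prod_pos hlam.le fun i => ha.le.trans (hq i).1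
  have hB : 0 < B := pos_of_mul_pos_right (hfa ▸ by positivity) ha.le
  have hmB : m * B = 1 + lam * ∏ i, q i := by
    rw [div_eq_iff hden.ne'] at heq
    simp only [m, heq]
    field_simp
  have hmB_le : m * B ≤ 1 + lam * m ^ n := by
    rw [hmB]
    gcongr
    simpa using prod_le_mean_pow_card univ fun i _ => ha.le.trans (hq i).1
  have hm_end : m = a ∨ m = b := by
    by_contra! hne
    exact (one_add_mul_pow_lt_mul_of_mem_Ioo hd hlam ha.le hfa hfb
      ⟨hm.1.lt_of_ne hne.1.symm, hm.2.lt_of_ne hne.2⟩).not_ge hmB_le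
  exact hm_end.imp (forall_eq_of_mean_eq_of_le fun i => (hq i).1)
    (forall_eq_of_mean_eq_of_ge fun i => (hq i).2)

end Tuples

theorem stmt6_general (d : ℕ) (hd : 3 ≤ d) (lam : ℝ) (hlam : 0 < lam)
    (qm qp : ℝ) (hqm : qm ∈ Ioo (0:ℝ) 1) (hqp : qp ∈ Ioo (0:ℝ) 1)
    (h1 : qm = hcF d lam qp) (h2 : qp = hcF d lam qm) :
    (∀ q : Fin d → ℝ, (∀ i, q i ∈ Icc qm qp) →
      (d : ℝ) * (1 / qm + 1 / qp - 1)⁻¹ ≤ (∑ i, q i) / (1 + lam * ∏ i, q i)) ∧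
    ((d : ℝ) * qm) / (1 + lam * qm ^ d) = (d : ℝ) * (1 / qm + 1 / qp - 1)⁻¹ ∧
    ((d : ℝ) * qp) / (1 + lam * qp ^ d) = (d : ℝ) * (1 / qm + 1 / qp - 1)⁻¹ ∧
    (qm < qp → ∀ q : Fin d → ℝ, (∀ i, q i ∈ Icc qm qp) →
      (∑ i, q i) / (1 + lam * ∏ i, q i) = (d : ℝ) * (1 / qm + 1 / qp - 1)⁻¹ →
      (∀ i, q i = qm) ∨ (∀ i, q i = qp)) := by
  set B := 1 / qm + 1 / qp - 1 with hB
  have hfm : qm * B = 1 + lam * qm ^ d :=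
    mul_one_div_add_one_div_sub_one_of_eq_hcF (by omega) hqm.1.ne' h2
  have hfp : qp * B = 1 + lam * qp ^ d := by
    rw [hB, add_comm (1 / qm)]
    exact mul_one_div_add_one_div_sub_one_of_eq_hcF (by omega) hqp.1.ne' h1
  have hcard : Fintype.card (Fin d) = d := Fintype.card_fin d
  have : Nonempty (Fin d) := ⟨⟨0, by omega⟩⟩
  refine ⟨fun q hq => ?_, ?_, ?_, fun _ q hq heq => ?_⟩
  · simpa [hcard] using card_mul_inv_le_sum_div_one_add_mul_prod hlam.le hqm.1
      (by rwa [hcard]) (by rwa [hcard]) hq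
  · rw [← hfm, mul_comm qm, mul_div_mul_right _ _ hqm.1.ne', div_eq_mul_inv]
  · rw [← hfp, mul_comm qp, mul_div_mul_right _ _ hqp.1.ne', div_eq_mul_inv]
  · exact forall_eq_or_forall_eq_of_sum_div_eq (by omega) hlam hqm.1
      (by rwa [hcard]) (by rwa [hcard]) hq (by rwa [hcard])

theorem stmt6 (d : ℕ) (hd : 3 ≤ d) (lam : ℝ) (hlam : 0 < lam)
    (qm qp : ℝ) (hqm : qm ∈ Ioo (0:ℝ) 1) (hqp : qp ∈ Ioo (0:ℝ) 1)
    (hle : qm ≤ qp) (h1 : qm = hcF d lam qp) (h2 : qp = hcF d lam qm) :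
    (∀ q : Fin d → ℝ, (∀ i, q i ∈ Icc qm qp) →
      (d : ℝ) * (1 / qm + 1 / qp - 1)⁻¹ ≤ (∑ i, q i) / (1 + lam * ∏ i, q i)) ∧
    ((d : ℝ) * qm) / (1 + lam * qm ^ d) = (d : ℝ) * (1 / qm + 1 / qp - 1)⁻¹ ∧
    ((d : ℝ) * qp) / (1 + lam * qp ^ d) = (d : ℝ) * (1 / qm + 1 / qp - 1)⁻¹ ∧
    (qm < qp → ∀ q : Fin d → ℝ, (∀ i, q i ∈ Icc qm qp) →
      (∑ i, q i) / (1 + lam * ∏ i, q i) = (d : ℝ) * (1 / qm + 1 / qp - 1)⁻¹ →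
      (∀ i, q i = qm) ∨ (∀ i, q i = qp)) :=
  stmt6_general d hd lam hlam qm qp hqm hqp h1 h2
end

section
/- Fix an integer d ≥ 3. For λ > λ_c(d), let q^+(λ) be the largest fixed point of F_λ ∘ F_λ in (0,1) and let q^-(λ) = F_λ(q^+(λ)). Then q^+(λ) → 1 and q^-(λ) → 0 as λ → ∞, and the Bethe free energy Φ(λ) = Φ_λ(q^+(λ), q^-(λ)) satisfies lim_{λ→∞} [Φ(λ) − (1/2)log(1+λ)] = 0. -/
/-!
For fixed `b ∈ (0,1)` we have `λ F_λ(b) → b^{-(d-1)}` and `F_λ(b) → 0`, so `λ F_λ(b)^{d-1} → 0`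
because `d - 1 ≥ 2`. Hence `F_λ(F_λ(b)) → 1 > b`, and the intermediate value theorem on `[b, 1]`
yields a fixed point of `F_λ ∘ F_λ` above `b`, so `q⁺(λ) ≥ b` for large `λ` and `q⁺ → 1`.
The same asymptotics with `q⁺ → 1` in place of `b` give `q⁻ → 0` and `λ (q⁻)^d → 0`, and then
each logarithm in `Φ(λ) - ½ log(1 + λ)` tends to `log 1 = 0`.
-/

open Set Filter

/-- The bipartite hard-core Bethe free energy functional. -/
noncomputable def hcPhi (d : ℕ) (lam a b : ℝ) : ℝ :=
  (1/2) * Real.log (1 + lam * a ^ d) + (1/2) * Real.log (1 + lam * b ^ d)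
    - ((d:ℝ)/2) * Real.log (a + b - a * b)

open Topology

section Basic

variable {d : ℕ} {lam q : ℝ}

lemma hcF_pos (hlam : 0 ≤ lam) (hq : 0 ≤ q) : 0 < hcF d lam q := by
  unfold hcF; positivity

lemma hcF_lt_one (hlam : 0 < lam) (hq : 0 < q) : hcF d lam q < 1 := by
  rw [hcF, div_lt_one (by positivity)]
  have := mul_pos hlam (pow_pos hq (d - 1))
  linarith

lemma continuousOn_hcF (hlam : 0 ≤ lam) : ContinuousOn (hcF d lam) (Ici 0) := by
  refine continuousOn_const.div (by fun_prop) fun q (hq : 0 ≤ q) => ?_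
  positivity

lemma exists_hcF_hcF_fixedPoint_mem_Ico {b : ℝ} (hlam : 0 < lam) (hb0 : 0 < b) (hb1 : b < 1)
    (hb : b ≤ hcF d lam (hcF d lam b)) : ∃ c ∈ Ico b 1, hcF d lam (hcF d lam c) = c := by
  have hcont : ContinuousOn (fun q => hcF d lam (hcF d lam q) - q) (Icc b 1) := by
    have hIcc : MapsTo id (Icc b 1) (Ici 0) := fun q hq => hb0.le.trans hq.1
    refine ((continuousOn_hcF hlam.le).comp ((continuousOn_hcF hlam.le).mono hIcc)
      fun q _ => (hcF_pos hlam.le (hIcc ‹_›)).le).sub continuousOn_id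
  have hone : hcF d lam (hcF d lam 1) - 1 < 0 :=
    sub_neg.2 (hcF_lt_one hlam (hcF_pos hlam.le zero_le_one))
  obtain ⟨c, hc, hfix⟩ := intermediate_value_Icc' hb1.le hcont ⟨hone.le, sub_nonneg.2 hb⟩
  have hc1 : c ≠ 1 := by rintro rfl; exact hone.ne hfix
  exact ⟨c, ⟨hc.1, hc.2.lt_of_ne hc1⟩, sub_eq_zero.1 hfix⟩

end Basic

section Asymptotics

variable {d : ℕ} {q : ℝ → ℝ} {c : ℝ}

lemma tendsto_mul_hcF (hq : Tendsto q atTop (𝓝 c)) (hc : 0 < c) :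
    Tendsto (fun lam => lam * hcF d lam (q lam)) atTop (𝓝 (c ^ (d - 1))⁻¹) := by
  have hlim : Tendsto (fun lam : ℝ => (lam⁻¹ + q lam ^ (d - 1))⁻¹) atTop
      (𝓝 (0 + c ^ (d - 1))⁻¹) :=
    (tendsto_inv_atTop_zero.add (hq.pow _)).inv₀ (by positivity)
  rw [zero_add] at hlim
  refine hlim.congr' ?_
  filter_upwards [eventually_gt_atTop 0] with lam hlam
  rw [hcF]
  field_simp

lemma tendsto_hcF (hq : Tendsto q atTop (𝓝 c)) (hc : 0 < c) :
    Tendsto (fun lam => hcF d lam (q lam)) atTop (𝓝 0) := by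
  have hlim := tendsto_inv_atTop_zero.mul (tendsto_mul_hcF (d := d) hq hc)
  rw [zero_mul] at hlim
  refine hlim.congr' ?_
  filter_upwards [eventually_gt_atTop 0] with lam hlam
  rw [inv_mul_cancel_left₀ hlam.ne']

lemma tendsto_mul_hcF_pow {n : ℕ} (hn : 2 ≤ n) (hq : Tendsto q atTop (𝓝 c)) (hc : 0 < c) :
    Tendsto (fun lam => lam * hcF d lam (q lam) ^ n) atTop (𝓝 0) := by
  have hlim := (tendsto_mul_hcF (d := d) hq hc).mul ((tendsto_hcF (d := d) hq hc).pow (n - 1))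
  rw [zero_pow (by omega), mul_zero] at hlim
  refine hlim.congr fun lam => ?_
  rw [mul_assoc, ← pow_succ', Nat.sub_add_cancel (by omega)]

lemma tendsto_hcF_hcF_const (hd : 3 ≤ d) {b : ℝ} (hb : 0 < b) :
    Tendsto (fun lam => hcF d lam (hcF d lam b)) atTop (𝓝 1) := by
  have hlim := ((tendsto_mul_hcF_pow (d := d) (n := d - 1) (by omega)
    (tendsto_const_nhds (x := b)) hb).const_add 1).inv₀ (by norm_num)
  simpa [hcF] using hlim

end Asymptotics

lemma tendsto_one_of_forall_hcF_hcF_fixedPoint_le {d : ℕ} (hd : 3 ≤ d) {p : ℝ → ℝ}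
    (hlt : ∀ᶠ lam in atTop, p lam < 1)
    (hmax : ∀ᶠ lam in atTop,
      ∀ q ∈ Ioo (0:ℝ) 1, hcF d lam (hcF d lam q) = q → q ≤ p lam) :
    Tendsto p atTop (𝓝 1) := by
  refine tendsto_order.2 ⟨fun a ha => ?_, fun a ha => hlt.mono fun lam h => h.trans ha⟩
  obtain ⟨b, hab, hb1⟩ := exists_between (max_lt ha one_pos)
  have hb0 : 0 < b := (le_max_right a 0).trans_lt hab
  filter_upwards [hmax, eventually_gt_atTop 0,
    (tendsto_hcF_hcF_const hd hb0).eventually (eventually_gt_nhds hb1)] with lam hmax hlam hb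
  obtain ⟨c, hc, hfix⟩ := exists_hcF_hcF_fixedPoint_mem_Ico hlam hb0 hb1 hb.le
  exact (le_max_left a 0).trans_lt (hab.trans_le (hc.1.trans
    (hmax c ⟨hb0.trans_le hc.1, hc.2⟩ hfix)))

lemma tendsto_hcPhi_sub_log {d : ℕ} {p m : ℝ → ℝ} (hp : Tendsto p atTop (𝓝 1))
    (hm : Tendsto m atTop (𝓝 0)) (hlm : Tendsto (fun lam => lam * m lam ^ d) atTop (𝓝 0)) :
    Tendsto (fun lam => hcPhi d lam (p lam) (m lam) - (1/2) * Real.log (1 + lam))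
      atTop (𝓝 0) := by
  -- `(1 + λ p^d) / (1 + λ) = p^d + (1 - p^d) / (1 + λ)`
  have hratio : Tendsto (fun lam => p lam ^ d + (1 - p lam ^ d) / (1 + lam)) atTop (𝓝 1) := by
    simpa using (hp.pow d).add (((hp.pow d).const_sub 1).div_atTop
      (tendsto_atTop_add_const_left _ 1 tendsto_id))
  have hsum : Tendsto (fun lam => p lam + m lam - p lam * m lam) atTop (𝓝 1) := by
    simpa using (hp.add hm).sub (hp.mul hm)
  have hlim := (((hratio.log one_ne_zero).const_mul (1/2)).add
    (((hlm.const_add 1).log (by norm_num)).const_mul (1/2))).sub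
    ((hsum.log one_ne_zero).const_mul ((d:ℝ)/2))
  simp only [add_zero, Real.log_one, mul_zero, sub_zero] at hlim
  refine hlim.congr' ?_
  filter_upwards [eventually_gt_atTop 0, hp.eventually (eventually_gt_nhds one_pos)]
    with lam hlam hp0
  have h1 : (0:ℝ) < 1 + lam := by linarith
  have h2 : 0 < 1 + lam * p lam ^ d := by positivity
  have hfrac : p lam ^ d + (1 - p lam ^ d) / (1 + lam) = (1 + lam * p lam ^ d) / (1 + lam) := by
    field_simp; ring
  rw [hfrac, Real.log_div h2.ne' h1.ne', hcPhi]
  ring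

theorem stmt9 (d : ℕ) (hd : 3 ≤ d) (qp qm : ℝ → ℝ)
    (hqp : ∀ lam : ℝ, hcLamc d < lam →
      qp lam ∈ Ioo (0:ℝ) 1 ∧ hcF d lam (hcF d lam (qp lam)) = qp lam ∧
      ∀ q ∈ Ioo (0:ℝ) 1, hcF d lam (hcF d lam q) = q → q ≤ qp lam)
    (hqm : ∀ lam : ℝ, hcLamc d < lam → qm lam = hcF d lam (qp lam)) :
    Tendsto qp atTop (nhds 1) ∧
    Tendsto qm atTop (nhds 0) ∧
    Tendsto (fun lam => hcPhi d lam (qp lam) (qm lam) - (1/2) * Real.log (1 + lam))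
      atTop (nhds 0) := by
  have hsuper : ∀ᶠ lam in atTop, hcLamc d < lam := eventually_gt_atTop _
  have hqpT : Tendsto qp atTop (𝓝 1) :=
    tendsto_one_of_forall_hcF_hcF_fixedPoint_le hd
      (hsuper.mono fun lam h => (hqp lam h).1.2) (hsuper.mono fun lam h => (hqp lam h).2.2)
  have hqmT : Tendsto qm atTop (𝓝 0) :=
    (tendsto_hcF hqpT one_pos).congr' (hsuper.mono fun lam h => (hqm lam h).symm)
  have hlm : Tendsto (fun lam => lam * qm lam ^ d) atTop (𝓝 0) :=
    (tendsto_mul_hcF_pow (d := d) (n := d) (by omega) hqpT one_pos).congr'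
      (hsuper.mono fun lam h => by simp only [hqm lam h])
  exact ⟨hqpT, hqmT, tendsto_hcPhi_sub_log hqpT hqmT hlm⟩
end

section
/- Let β < 0 and for a, b ∈ (0,1) define g(a,b) = [e^{−β} − (e^{β}+e^{−β})(ab + (1−a)(1−b))] / [e^{−β} − (e^{−β}−e^{β})(ab + (1−a)(1−b))]. Then the partial derivative ∂g/∂b(a,b) is positive if a < 1/2, zero if a = 1/2, and negative if a > 1/2. Consequently, for any 0 < h^- ≤ 1/2 ≤ h^+ < 1 and all a, b ∈ [h^-, h^+], one has g(a,b) ≤ g(h^-, h^+) = g(h^+, h^-). -/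
open Set

/-- The negative edge correlation `−⟨σ_o σ_j⟩` for the Ising model at inverse
temperature `β`, when the two directed messages along the edge assign
probabilities `a` and `b` to spin `+1`. -/
noncomputable def isingG (β a b : ℝ) : ℝ :=
  (Real.exp (-β) - (Real.exp β + Real.exp (-β)) * (a * b + (1 - a) * (1 - b))) /
  (Real.exp (-β) - (Real.exp (-β) - Real.exp β) * (a * b + (1 - a) * (1 - b)))

/-! `isingG β a b` depends on `(a, b)` only through the probability
`s = ab + (1 - a)(1 - b)` that two independent spins with `+1`-probabilities `a`, `b` agree,
and `s ↦ (e^{-β} - (e^β + e^{-β}) s) / (e^{-β} - (e^{-β} - e^β) s)` is a Möbius map with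
derivative `-2 / den²` (as `e^{-β} e^β = 1`), so decreasing on `[0, 1]`. Since `∂s/∂b = 2a - 1`, the sign
of `∂g/∂b` is that of `1 - 2a`; and on a box `[h⁻, h⁺]²` straddling `1/2`, the agreement
`s - 1/2 = 2 (a - 1/2)(b - 1/2)` is smallest at the corner `(h⁻, h⁺)`. -/

open Real

def spinAgreement (a b : ℝ) : ℝ := a * b + (1 - a) * (1 - b)

noncomputable def isingMobius (β s : ℝ) : ℝ :=
  (exp (-β) - (exp β + exp (-β)) * s) / (exp (-β) - (exp (-β) - exp β) * s)

lemma isingG_eq_isingMobius (β a b : ℝ) : isingG β a b = isingMobius β (spinAgreement a b) := rfl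

lemma spinAgreement_comm (a b : ℝ) : spinAgreement a b = spinAgreement b a := by
  unfold spinAgreement; ring

lemma spinAgreement_mem_Icc {a b : ℝ} (ha : a ∈ Icc (0 : ℝ) 1) (hb : b ∈ Icc (0 : ℝ) 1) :
    spinAgreement a b ∈ Icc (0 : ℝ) 1 := by
  obtain ⟨ha0, ha1⟩ := ha
  obtain ⟨hb0, hb1⟩ := hb
  constructor <;> unfold spinAgreement <;>
    nlinarith [mul_nonneg ha0 hb0, mul_nonneg (sub_nonneg.2 ha1) (sub_nonneg.2 hb1),
      mul_nonneg ha0 (sub_nonneg.2 hb1), mul_nonneg (sub_nonneg.2 ha1) hb0]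

lemma hasDerivAt_spinAgreement (a b : ℝ) : HasDerivAt (spinAgreement a) (2 * a - 1) b := by
  have h := ((hasDerivAt_id b).const_mul a).add (((hasDerivAt_id b).const_sub 1).const_mul (1 - a))
  exact h.congr_deriv (by ring)

lemma spinAgreement_corner_le {m p a b : ℝ} (hm : m ≤ 1 / 2) (hp : 1 / 2 ≤ p)
    (ha : a ∈ Icc m p) (hb : b ∈ Icc m p) : spinAgreement m p ≤ spinAgreement a b := by
  obtain ⟨ham, hap⟩ := ha
  obtain ⟨hbm, hbp⟩ := hb
  unfold spinAgreement
  rcases le_total a (1 / 2) with h | h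
  · nlinarith [mul_nonneg (sub_nonneg.2 h) (sub_nonneg.2 hbp),
      mul_nonneg (sub_nonneg.2 ham) (sub_nonneg.2 hp)]
  · nlinarith [mul_nonneg (sub_nonneg.2 h) (sub_nonneg.2 hbm),
      mul_nonneg (sub_nonneg.2 hap) (sub_nonneg.2 hm)]

lemma isingMobius_den_pos (β : ℝ) {s : ℝ} (hs : s ∈ Icc (0 : ℝ) 1) :
    0 < exp (-β) - (exp (-β) - exp β) * s := by
  obtain ⟨hs0, hs1⟩ := hs
  rcases le_total (exp (-β)) (exp β) with h | h
  · nlinarith [exp_pos (-β), mul_nonneg (sub_nonneg.2 h) hs0]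
  · nlinarith [exp_pos β, mul_nonneg (sub_nonneg.2 h) (sub_nonneg.2 hs1)]

lemma hasDerivAt_isingMobius (β : ℝ) {s : ℝ} (hden : exp (-β) - (exp (-β) - exp β) * s ≠ 0) :
    HasDerivAt (isingMobius β) (-2 / (exp (-β) - (exp (-β) - exp β) * s) ^ 2) s := by
  have hnum := ((hasDerivAt_id s).const_mul (exp β + exp (-β))).const_sub (exp (-β))
  have hden' := ((hasDerivAt_id s).const_mul (exp (-β) - exp β)).const_sub (exp (-β))
  refine (hnum.div hden' hden).congr_deriv ?_
  have hEF : exp (-β) * exp β = 1 := by rw [← exp_add, neg_add_cancel, exp_zero]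
  congr 1
  linear_combination (-2 : ℝ) * hEF

lemma isingMobius_antitoneOn (β : ℝ) : AntitoneOn (isingMobius β) (Icc 0 1) := by
  intro s hs t ht hst
  rw [isingMobius, isingMobius, div_le_div_iff₀ (isingMobius_den_pos β ht)
    (isingMobius_den_pos β hs)]
  nlinarith [mul_nonneg (mul_pos (exp_pos (-β)) (exp_pos β)).le (sub_nonneg.2 hst)]

theorem stmt16_general (β : ℝ) :
    (∀ a ∈ Ioo (0:ℝ) 1, ∀ b ∈ Ioo (0:ℝ) 1,
      ∃ D : ℝ, HasDerivAt (fun y => isingG β a y) D b ∧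
        (a < 1/2 → 0 < D) ∧ (a = 1/2 → D = 0) ∧ (1/2 < a → D < 0)) ∧
    (∀ hm hp : ℝ, 0 < hm → hm ≤ 1/2 → 1/2 ≤ hp → hp < 1 →
      (∀ a ∈ Icc hm hp, ∀ b ∈ Icc hm hp, isingG β a b ≤ isingG β hm hp) ∧
      isingG β hm hp = isingG β hp hm) := by
  refine ⟨fun a ha b hb => ?_, fun hm hp hm0 hm2 hp2 hp1 => ⟨fun a ha b hb => ?_, ?_⟩⟩
  · have hs := spinAgreement_mem_Icc (Ioo_subset_Icc_self ha) (Ioo_subset_Icc_self hb)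
    have hden := isingMobius_den_pos β hs
    have hslope : -2 / (exp (-β) - (exp (-β) - exp β) * spinAgreement a b) ^ 2 < 0 :=
      div_neg_of_neg_of_pos (by norm_num) (pow_pos hden 2)
    refine ⟨_, (hasDerivAt_isingMobius β hden.ne').comp b (hasDerivAt_spinAgreement a b),
      fun h => mul_pos_of_neg_of_neg hslope (by linarith), fun h => by simp [h],
      fun h => mul_neg_of_neg_of_pos hslope (by linarith)⟩
  · have hunit : Icc hm hp ⊆ Icc 0 1 := Icc_subset_Icc hm0.le hp1.le
    exact isingMobius_antitoneOn β
      (spinAgreement_mem_Icc (hunit (left_mem_Icc.2 (hm2.trans hp2)))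
        (hunit (right_mem_Icc.2 (hm2.trans hp2))))
      (spinAgreement_mem_Icc (hunit ha) (hunit hb))
      (spinAgreement_corner_le hm2 hp2 ha hb)
  · rw [isingG_eq_isingMobius, isingG_eq_isingMobius, spinAgreement_comm]

theorem stmt16 (β : ℝ) (hβ : β < 0) :
    (∀ a ∈ Ioo (0:ℝ) 1, ∀ b ∈ Ioo (0:ℝ) 1,
      ∃ D : ℝ, HasDerivAt (fun y => isingG β a y) D b ∧
        (a < 1/2 → 0 < D) ∧ (a = 1/2 → D = 0) ∧ (1/2 < a → D < 0)) ∧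
    (∀ hm hp : ℝ, 0 < hm → hm ≤ 1/2 → 1/2 ≤ hp → hp < 1 →
      (∀ a ∈ Icc hm hp, ∀ b ∈ Icc hm hp, isingG β a b ≤ isingG β hm hp) ∧
      isingG β hm hp = isingG β hp hm) :=
  stmt16_general β
end
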